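/- arXiv:1101.4380 — 4 statements merged into one kernel-verified Lean document; each statement's English description precedes it below -/
import Mathlib

section
/- Let A be a singular primary integer of K with A·Z_K = 𝔞^p for a non-principal ideal 𝔞 of Z_K, and let S = K(A^{1/p}). Then S/K is a cyclic extension of degree p which is unramified at every prime of K (including the prime π above p). -/
set_option maxHeartbeats 1000000

open NumberField Ideal Polynomial nonZeroDivisors

attribute [local instance] FractionRing.liftAlgebra FractionRing.isScalarTower_liftAlgebra

section AuxLemmas

/-- If a monic polynomial of degree `[S:K]` kills `θ` and `θ` generates `S` over `K`,
it is the minimal polynomial of `θ`. -/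
lemma aux_minpoly_field {K S : Type*} [Field K] [Field S] [Algebra K S] [FiniteDimensional K S]
    {θ : S} {f : Polynomial K} (hf : f.Monic) (hroot : Polynomial.aeval θ f = 0)
    (hdeg : f.natDegree = Module.finrank K S)
    (htop : Algebra.adjoin K {θ} = ⊤) : minpoly K θ = f := by
  have hint : IsIntegral K θ := IsIntegral.of_finite K θ
  have htop' : IntermediateField.adjoin K {θ} = ⊤ := by
    apply IntermediateField.toSubalgebra_injective
    rw [IntermediateField.adjoin_simple_toSubalgebra_of_isAlgebraic hint.isAlgebraic, htop,
      IntermediateField.top_toSubalgebra]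
  have hdeg' : (minpoly K θ).natDegree = Module.finrank K S := by
    rw [← IntermediateField.adjoin.finrank hint, htop', IntermediateField.finrank_top']
  obtain ⟨c, hc⟩ := minpoly.dvd K θ hroot
  have hm := minpoly.monic hint
  have hc0 : c ≠ 0 := by rintro rfl; rw [mul_zero] at hc; exact hf.ne_zero hc
  have hdegc : c.natDegree = 0 := by
    have h2 := natDegree_mul (minpoly.ne_zero hint) hc0
    rw [← hc, hdeg, hdeg'] at h2; omega
  have hcl : c.Monic := by
    have h3 : f.leadingCoeff = (minpoly K θ).leadingCoeff * c.leadingCoeff := by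
      rw [hc, leadingCoeff_mul]
    rw [hf.leadingCoeff, hm.leadingCoeff, one_mul] at h3
    exact h3.symm
  rw [hc, Polynomial.eq_one_of_monic_natDegree_zero hcl hdegc, mul_one]

/-- Descend a minimal polynomial computation to the rings of integers. -/
lemma aux_minpoly_int {K S : Type*} [Field K] [NumberField K] [Field S] [NumberField S]
    [Algebra K S] {θ : 𝓞 S} {g : Polynomial (𝓞 K)}
    (h : g.map (algebraMap (𝓞 K) K) = minpoly K (algebraMap (𝓞 S) S θ)) :
    minpoly (𝓞 K) θ = g := by
  have hint : IsIntegral (𝓞 K) θ := IsIntegral.of_finite _ θ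
  have h2 := minpoly.isIntegrallyClosed_eq_field_fractions K S hint
  exact Polynomial.map_injective (algebraMap (𝓞 K) K) (IsFractionRing.injective (𝓞 K) K)
    (by rw [h, h2])

/-- An element of a number field integral over `𝓞 K` is integral over `ℤ`. -/
lemma aux_int_int {K S : Type*} [Field K] [NumberField K] [Field S] [Algebra K S]
    {x : S} (h : IsIntegral (𝓞 K) x) : IsIntegral ℤ x := by
  have : IsScalarTower ℤ (𝓞 K) S := IsScalarTower.of_algebraMap_eq fun n => by
    simp [map_intCast]
  exact isIntegral_trans x h

/-- `(ζ - 1) ^ (p - 1)` is associated to `p`. -/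
lemma aux_assoc {R : Type*} [CommRing R] [IsDomain R] {p : ℕ} (hp : p.Prime) {ζ : R}
    (hζ : IsPrimitiveRoot ζ p) : Associated ((ζ - 1) ^ (p - 1)) ((p : R)) := by
  obtain ⟨n, rfl⟩ : ∃ n, p = n + 1 := ⟨p - 1, (Nat.succ_pred_eq_of_pos hp.pos).symm⟩
  have key : ∀ k ∈ Finset.range n, Associated (ζ - 1) (ζ ^ (k + 1) - 1) := by
    intro k hk
    rw [Finset.mem_range] at hk
    have h1 : (ζ - 1) ∣ ζ ^ (k + 1) - 1 := by
      simpa using sub_dvd_pow_sub_pow ζ 1 (k + 1)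
    have hcop : Nat.Coprime (n + 1) (k + 1) :=
      (Nat.Prime.coprime_iff_not_dvd hp).mpr (fun hdvd => by
        have := Nat.le_of_dvd (by omega) hdvd; omega)
    have hprim : IsPrimitiveRoot (ζ ^ (k + 1)) (n + 1) := hζ.pow_of_coprime _ hcop.symm
    have : NeZero (n + 1) := ⟨by omega⟩
    obtain ⟨i, -, hi⟩ := hprim.eq_pow_of_pow_eq_one hζ.pow_eq_one
    have h2 : (ζ ^ (k + 1) - 1) ∣ ζ - 1 := by
      have h3 := sub_dvd_pow_sub_pow (ζ ^ (k + 1)) 1 i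
      rw [one_pow, hi] at h3
      exact h3
    exact associated_of_dvd_dvd h1 h2
  have h3 : Associated ((ζ - 1) ^ n) (∏ k ∈ Finset.range n, (ζ ^ (k + 1) - 1)) := by
    have := Associated.prod (Finset.range n) (fun _ => ζ - 1) (fun k => ζ ^ (k + 1) - 1) key
    simpa using this
  have h4 : Associated (∏ k ∈ Finset.range n, (ζ ^ (k + 1) - 1)) (((n + 1 : ℕ) : R)) := by
    have hprod := hζ.prod_pow_sub_one_eq_order
    have h5 : Associated ((-1 : R) ^ n * ∏ k ∈ Finset.range n, (ζ ^ (k + 1) - 1))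
        (∏ k ∈ Finset.range n, (ζ ^ (k + 1) - 1)) :=
      associated_unit_mul_left _ _ ((isUnit_one.neg).pow n)
    rw [hprod] at h5
    have : ((n + 1 : ℕ) : R) = (n : R) + 1 := by push_cast; ring
    rw [this]
    exact h5.symm
  simpa using h3.trans h4

end AuxLemmas

/-- Let `p` be an odd irregular prime, `K = ℚ(ζ)` the `p`-th cyclotomic
field, `π = (ζ - 1)` the prime of `𝓞 K` above `p`. Let `A` be a singular primary integer
of `K` with `A ⬝ Z_K = 𝔞 ^ p` for a non-principal ideal `𝔞`, and let `S = K(A^{1/p})`.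
Then `S/K` is a cyclic extension of degree `p` which is unramified at every prime of `K`. -/
theorem singular_primary_extension_cyclic_unramified
    (p : ℕ+) (hp : (p : ℕ).Prime) (hodd : Odd (p : ℕ))
    (K : Type*) [Field K] [NumberField K] [IsCyclotomicExtension {(p : ℕ)} ℚ K]
    (hirr : (p : ℕ) ∣ classNumber K)
    (ζ : 𝓞 K) (hζ : IsPrimitiveRoot ζ p)
    (π : Ideal (𝓞 K)) (hπ : π = Ideal.span {ζ - 1})
    (A : 𝓞 K)
    -- `v_π(A) = 0`
    (hval : A ∉ π)
    -- `A ∉ K^p`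
    (hnotp : ¬ ∃ B : K, B ^ (p : ℕ) = (A : K))
    -- `A ⬝ Z_K = 𝔞 ^ p` with `𝔞` non-principal
    (𝔞 : Ideal (𝓞 K)) (h𝔞 : ¬ 𝔞.IsPrincipal)
    (hsing : Ideal.span {A} = 𝔞 ^ (p : ℕ))
    -- `A` is primary : `A ≡ a ^ p mod π ^ p` with `a` coprime to `p`
    (hprim : ∃ a : ℤ, ¬ (p : ℤ) ∣ a ∧ A - (a : 𝓞 K) ^ (p : ℕ) ∈ π ^ (p : ℕ))
    -- `S = K(ω)` where `ω = A^{1/p}`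
    (S : Type*) [Field S] [NumberField S] [Algebra K S]
    (ω : S) (hω : ω ^ (p : ℕ) = algebraMap K S (A : K))
    (hgen : Algebra.adjoin K {ω} = ⊤) :
    Module.finrank K S = p ∧ IsGalois K S ∧ IsCyclic (S ≃ₐ[K] S) ∧
      ∀ q : Ideal (𝓞 K), q ≠ ⊥ → q.IsPrime →
        ∀ Q : Ideal (𝓞 S), Q.IsPrime →
          Q.comap (algebraMap (𝓞 K) (𝓞 S)) = q →
            Ideal.ramificationIdx' q Q = 1 := by
  classical
  obtain ⟨a, -, haA⟩ := hprim
  have hppos : 0 < (p : ℕ) := hp.pos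
  have hp1 : 1 < (p : ℕ) := hp.one_lt
  haveI : Fact (Nat.Prime (p : ℕ)) := ⟨hp⟩
  have hinj : Function.Injective (algebraMap (𝓞 K) K) := IsFractionRing.injective _ _
  have hζK : IsPrimitiveRoot (algebraMap (𝓞 K) K ζ) (p : ℕ) := hζ.map_of_injective hinj
  -- facts about λ = ζ - 1
  have hζK' : IsPrimitiveRoot ((algebraMap (𝓞 K) K ζ)) (p : ℕ+) := hζK
  have htoint : hζK'.toInteger = ζ := rfl
  have hlprime : Prime (ζ - 1) := htoint ▸ hζK'.zeta_sub_one_prime'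
  have hlne : (ζ - 1) ≠ 0 := hlprime.ne_zero
  have hπprime : π.IsPrime := by
    rw [hπ]
    exact (Ideal.span_singleton_prime hlne).mpr hlprime
  have hπbot : π ≠ ⊥ := by
    rw [hπ]
    simpa using hlne
  have hπmax : π.IsMaximal := hπprime.isMaximal hπbot
  have hassoc : Associated ((ζ - 1) ^ ((p : ℕ) - 1)) (((p : ℕ) : 𝓞 K)) := aux_assoc hp hζ
  obtain ⟨v, hv⟩ := hassoc
  have hqp_eq_pi : ∀ q : Ideal (𝓞 K), q.IsPrime → ((p : ℕ) : 𝓞 K) ∈ q → q = π := by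
    intro q hq hpq
    have h1 : (ζ - 1) ^ ((p : ℕ) - 1) ∈ q := by
      have h2 : ((ζ - 1) ^ ((p : ℕ) - 1)) = ((p : ℕ) : 𝓞 K) * (v⁻¹ : (𝓞 K)ˣ) := by
        rw [← hv, mul_assoc]
        simp
      rw [h2]
      exact q.mul_mem_right _ hpq
    have h2 : (ζ - 1) ∈ q := hq.mem_of_pow_mem _ h1
    have h3 : π ≤ q := by
      rw [hπ, Ideal.span_le, Set.singleton_subset_iff]
      exact h2
    exact (hπmax.eq_of_le hq.ne_top h3).symm
  -- Part A : degree
  have hirr1 : Irreducible (X ^ (p : ℕ) - C ((A : K))) :=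
    X_pow_sub_C_irreducible_of_prime hp (fun b hb => hnotp ⟨b, hb⟩)
  have hωtop : IntermediateField.adjoin K {ω} = ⊤ := by
    apply IntermediateField.toSubalgebra_injective
    rw [IntermediateField.adjoin_simple_toSubalgebra_of_isAlgebraic (IsIntegral.of_finite K ω).isAlgebraic, hgen,
      IntermediateField.top_toSubalgebra]
  have hmono : (X ^ (p : ℕ) - C ((A : K))).Monic := monic_X_pow_sub_C _ (by omega)
  have hroot : Polynomial.aeval ω (X ^ (p : ℕ) - C ((A : K))) = 0 := by
    simp [hω]
  have hfinrank : Module.finrank K S = (p : ℕ) := by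
    have h1 := IntermediateField.adjoin.finrank (IsIntegral.of_finite K ω)
    rw [hωtop, IntermediateField.finrank_top'] at h1
    rw [h1, ← minpoly.eq_of_irreducible_of_monic hirr1 hroot hmono]
    simp
  -- Part B : Galois and cyclic
  have hK' : (primitiveRoots (Module.finrank K S) K).Nonempty := by
    rw [hfinrank]
    exact ⟨_, (mem_primitiveRoots hppos).mpr hζK⟩
  have hω' : ω ^ (Module.finrank K S) = algebraMap K S ((A : K)) := by rw [hfinrank]; exact hω
  have hωtop' : IntermediateField.adjoin K {ω} = ⊤ := hωtop
  haveI hsplit : IsSplittingField K S (X ^ (Module.finrank K S) - C ((A : K))) :=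
    isSplittingField_X_pow_sub_C_of_root_adjoin_eq_top hK' hω' hωtop'
  have hirr2 : Irreducible (X ^ (Module.finrank K S) - C ((A : K))) := by
    rw [hfinrank]; exact hirr1
  haveI hGal : IsGalois K S := isGalois_of_isSplittingField_X_pow_sub_C hK' hirr2 S
  haveI : NeZero (Module.finrank K S) := ⟨by rw [hfinrank]; omega⟩
  have hcyc : IsCyclic (S ≃ₐ[K] S) := isCyclic_of_isSplittingField_X_pow_sub_C hK' hirr2 S
  refine ⟨hfinrank, hGal, hcyc, ?_⟩
  -- Part C : unramified
  intro q hqbot hq Q hQ hcomap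
  haveI := hq
  haveI hqmax : q.IsMaximal := hq.isMaximal hqbot
  have hinj2 : Function.Injective (algebraMap (𝓞 K) (𝓞 S)) :=
    FaithfulSMul.algebraMap_injective _ _
  have hinjS : Function.Injective (algebraMap (𝓞 S) S) := IsFractionRing.injective _ _
  have hinjKS : Function.Injective (algebraMap (𝓞 K) S) := by
    rw [IsScalarTower.algebraMap_eq (𝓞 K) K S]
    exact (algebraMap K S).injective.comp hinj
  -- the key : find an integral generator whose minimal polynomial has derivative ∉ Q
  have main : ∃ θ : 𝓞 S, Algebra.adjoin K {algebraMap (𝓞 S) S θ} = ⊤ ∧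
      Polynomial.aeval θ (derivative (minpoly (𝓞 K) θ)) ∉ Q := by
    by_cases hqπ : q = π
    · -- the ramified-looking prime `π`; use `θ = (ω - a)/(ζ - 1)`, which works since `A` is primary
      set b : Polynomial (𝓞 K) := C (ζ - 1) * X + C ((a : ℤ) : 𝓞 K) with hb
      set hpoly : Polynomial (𝓞 K) := b ^ (p : ℕ) - C A with hhp
      have hsplit0 : b ^ (p : ℕ) = (∑ k ∈ Finset.range (p : ℕ),
          (C (ζ - 1) * X) ^ (k + 1) * (C ((a : ℤ) : 𝓞 K)) ^ ((p : ℕ) - (k + 1))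
            * ((p : ℕ).choose (k + 1) : Polynomial (𝓞 K)))
          + C (((a : ℤ) : 𝓞 K) ^ (p : ℕ)) := by
        rw [hb, add_pow, Finset.sum_range_succ']
        congr 1
        simp [C_pow]
      have hterm : ∀ k ∈ Finset.range (p : ℕ), (C ((ζ - 1) ^ (p : ℕ))) ∣
          (C (ζ - 1) * X) ^ (k + 1) * (C ((a : ℤ) : 𝓞 K)) ^ ((p : ℕ) - (k + 1))
            * ((p : ℕ).choose (k + 1) : Polynomial (𝓞 K)) := by
        intro k hk
        rw [Finset.mem_range] at hk
        rcases eq_or_lt_of_le (Nat.succ_le_of_lt hk) with heq | hlt2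
        · have heq' : k + 1 = (p : ℕ) := heq
          rw [heq', Nat.sub_self, pow_zero, mul_one, Nat.choose_self, Nat.cast_one, mul_one,
            mul_pow, ← C_pow]
          exact dvd_mul_right _ _
        · obtain ⟨m, hm⟩ := hp.dvd_choose_self (Nat.succ_ne_zero k) hlt2
          have key : (ζ - 1) ^ (p : ℕ) ∣ (ζ - 1) ^ (k + 1) * (((p : ℕ).choose (k + 1)) : 𝓞 K) := by
            refine ⟨(ζ - 1) ^ k * ((v : 𝓞 K) * (m : 𝓞 K)), ?_⟩
            have h1 : (((p : ℕ).choose (k + 1)) : 𝓞 K) = (((p : ℕ)) : 𝓞 K) * (m : 𝓞 K) := by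
              rw [hm]; push_cast; ring
            have hpk : (k + 1) + ((p : ℕ) - 1) = (p : ℕ) + k := by omega
            calc (ζ - 1) ^ (k + 1) * (((p : ℕ).choose (k + 1)) : 𝓞 K)
                = (ζ - 1) ^ (k + 1) * ((ζ - 1) ^ ((p : ℕ) - 1) * (v : 𝓞 K) * (m : 𝓞 K)) := by
                  rw [h1, hv]
              _ = (ζ - 1) ^ ((k + 1) + ((p : ℕ) - 1)) * ((v : 𝓞 K) * (m : 𝓞 K)) := by
                  rw [pow_add]; ring
              _ = (ζ - 1) ^ (p : ℕ) * ((ζ - 1) ^ k * ((v : 𝓞 K) * (m : 𝓞 K))) := by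
                  rw [hpk, pow_add]; ring
          have hCdvd : (C ((ζ - 1) ^ (p : ℕ))) ∣
              (C (ζ - 1)) ^ (k + 1) * (((p : ℕ).choose (k + 1)) : Polynomial (𝓞 K)) := by
            have h2 := _root_.map_dvd (C : 𝓞 K →+* Polynomial (𝓞 K)) key
            simpa [C_pow, Polynomial.C_eq_natCast] using h2
          have hre : (C (ζ - 1) * X) ^ (k + 1) * (C ((a : ℤ) : 𝓞 K)) ^ ((p : ℕ) - (k + 1))
                * (((p : ℕ).choose (k + 1)) : Polynomial (𝓞 K))
              = ((C (ζ - 1)) ^ (k + 1) * (((p : ℕ).choose (k + 1)) : Polynomial (𝓞 K)))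
                * (X ^ (k + 1) * (C ((a : ℤ) : 𝓞 K)) ^ ((p : ℕ) - (k + 1))) := by
            rw [mul_pow]; ring
          rw [hre]
          exact hCdvd.mul_right _
      have hdvd : (C ((ζ - 1) ^ (p : ℕ))) ∣ hpoly := by
        have hconst : (C ((ζ - 1) ^ (p : ℕ))) ∣ C (((a : ℤ) : 𝓞 K) ^ (p : ℕ)) - C A := by
          rw [← _root_.map_sub]
          apply _root_.map_dvd
          have h12 : A - ((a : ℤ) : 𝓞 K) ^ (p : ℕ) ∈ Ideal.span {(ζ - 1) ^ (p : ℕ)} := by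
            rw [← Ideal.span_singleton_pow, ← hπ]
            exact haA
          rw [Ideal.mem_span_singleton] at h12
          exact dvd_sub_comm.mp h12
        rw [hhp, hsplit0, add_sub_assoc]
        exact dvd_add (Finset.dvd_sum hterm) hconst
      obtain ⟨g, hgdef⟩ := hdvd
      have hbdeg : b.natDegree = 1 := by rw [hb]; exact natDegree_linear hlne
      have hblc : b.leadingCoeff = ζ - 1 := by rw [hb]; exact leadingCoeff_linear hlne
      have hbpdeg : (b ^ (p : ℕ)).natDegree = (p : ℕ) := by rw [natDegree_pow, hbdeg, mul_one]
      have hbplc : (b ^ (p : ℕ)).leadingCoeff = (ζ - 1) ^ (p : ℕ) := by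
        rw [leadingCoeff_pow, hblc]
      have hdegh : hpoly.natDegree = (p : ℕ) := by rw [hhp, natDegree_sub_C, hbpdeg]
      have hlch : hpoly.leadingCoeff = (ζ - 1) ^ (p : ℕ) := by
        have hc : hpoly.coeff (p : ℕ) = (ζ - 1) ^ (p : ℕ) := by
          rw [hhp, coeff_sub, coeff_C, if_neg (by omega : ¬((p : ℕ) = 0)), sub_zero]
          have h0 := coeff_natDegree (p := b ^ (p : ℕ))
          rw [hbpdeg] at h0
          rw [h0, hbplc]
        rw [← coeff_natDegree, hdegh, hc]
      have hCne : (C ((ζ - 1) ^ (p : ℕ))) ≠ 0 :=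
        Polynomial.C_ne_zero.mpr (pow_ne_zero (p : ℕ) hlne)
      have hgne : g ≠ 0 := by
        rintro rfl
        rw [mul_zero] at hgdef
        rw [hgdef, natDegree_zero] at hdegh
        omega
      have hdegg : g.natDegree = (p : ℕ) := by
        have h13 := natDegree_mul hCne hgne
        rw [← hgdef, natDegree_C, zero_add, hdegh] at h13
        exact h13.symm
      have hgmonic : g.Monic := by
        have h14 : hpoly.leadingCoeff = (C ((ζ - 1) ^ (p : ℕ))).leadingCoeff * g.leadingCoeff := by
          rw [hgdef, leadingCoeff_mul]
        rw [hlch, leadingCoeff_C] at h14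
        have h15 : (ζ - 1) ^ (p : ℕ) * 1 = (ζ - 1) ^ (p : ℕ) * g.leadingCoeff := by
          rw [mul_one]; exact h14
        exact (mul_left_cancel₀ (pow_ne_zero _ hlne) h15).symm
      -- the element η = (ω - a)/(ζ - 1)
      set lS : S := algebraMap (𝓞 K) S (ζ - 1) with hlS
      set aS : S := algebraMap (𝓞 K) S ((a : ℤ) : 𝓞 K) with haS
      have hlSne : lS ≠ 0 := fun hh0 => hlne (hinjKS (by simpa [hlS] using hh0))
      set η : S := (ω - aS) / lS with hη
      have hηω : lS * η + aS = ω := by rw [hη]; field_simp; ring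
      have hevalb : ∀ x : S, Polynomial.aeval x b = lS * x + aS := by
        intro x
        rw [hb]
        simp [hlS, haS]
      have hevalh : Polynomial.aeval η hpoly = 0 := by
        rw [hhp, _root_.map_sub, _root_.map_pow, hevalb, hηω, aeval_C,
          IsScalarTower.algebraMap_apply (𝓞 K) K S, ← hω, sub_self]
      have hevalg : Polynomial.aeval η g = 0 := by
        have h16 : Polynomial.aeval η hpoly = lS ^ (p : ℕ) * Polynomial.aeval η g := by
          rw [hgdef, _root_.map_mul, aeval_C, _root_.map_pow, hlS]
        rw [hevalh] at h16
        exact (mul_eq_zero.mp h16.symm).resolve_left (pow_ne_zero _ hlSne)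
      have hηint : IsIntegral (𝓞 K) η := ⟨g, hgmonic, by rwa [← aeval_def]⟩
      refine ⟨⟨η, aux_int_int hηint⟩, ?_, ?_⟩
      · show Algebra.adjoin K {η} = ⊤
        rw [eq_top_iff, ← hgen]
        apply Algebra.adjoin_le
        rw [Set.singleton_subset_iff]
        rw [← hηω]
        refine add_mem (mul_mem ?_ (Algebra.self_mem_adjoin_singleton K η)) ?_
        · rw [hlS, IsScalarTower.algebraMap_apply (𝓞 K) K S]
          exact Subalgebra.algebraMap_mem _ _
        · rw [haS, IsScalarTower.algebraMap_apply (𝓞 K) K S]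
          exact Subalgebra.algebraMap_mem _ _
      · set θ : 𝓞 S := (⟨η, aux_int_int hηint⟩ : 𝓞 S) with hθ
        have hθS : algebraMap (𝓞 S) S θ = η := rfl
        have hθtop : Algebra.adjoin K {η} = ⊤ := by
          rw [eq_top_iff, ← hgen]
          apply Algebra.adjoin_le
          rw [Set.singleton_subset_iff]
          rw [← hηω]
          refine add_mem (mul_mem ?_ (Algebra.self_mem_adjoin_singleton K η)) ?_
          · rw [hlS, IsScalarTower.algebraMap_apply (𝓞 K) K S]
            exact Subalgebra.algebraMap_mem _ _
          · rw [haS, IsScalarTower.algebraMap_apply (𝓞 K) K S]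
            exact Subalgebra.algebraMap_mem _ _
        have hminK : minpoly K η = g.map (algebraMap (𝓞 K) K) := by
          refine aux_minpoly_field (hgmonic.map _) ?_ ?_ hθtop
          · rw [aeval_map_algebraMap]; exact hevalg
          · rw [natDegree_map_eq_of_injective hinj, hdegg, hfinrank]
        have hminO : minpoly (𝓞 K) θ = g := aux_minpoly_int (by rw [hθS, hminK])
        intro hmem
        rw [hminO] at hmem
        have hωint : IsIntegral (𝓞 K) ω := by
          refine ⟨X ^ (p : ℕ) - C A, monic_X_pow_sub_C _ (by omega), ?_⟩
          rw [eval₂_sub, eval₂_pow, eval₂_X, eval₂_C,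
            IsScalarTower.algebraMap_apply (𝓞 K) K S, ← hω, sub_self]
        set ωO : 𝓞 S := (⟨ω, aux_int_int hωint⟩ : 𝓞 S) with hωO
        have hωOS : algebraMap (𝓞 S) S ωO = ω := rfl
        have hderh : derivative hpoly = C ((ζ - 1) ^ (p : ℕ)) * derivative g := by
          rw [hgdef, derivative_C_mul]
        have hderb : derivative b = C (ζ - 1) := by
          rw [hb, derivative_add, derivative_C, add_zero, derivative_C_mul, derivative_X, mul_one]
        have hevaldh : Polynomial.aeval η (derivative hpoly)
            = ((p : ℕ) : S) * ω ^ ((p : ℕ) - 1) * lS := by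
          rw [hhp, derivative_sub, derivative_C, sub_zero, derivative_pow, hderb]
          simp only [_root_.map_mul, _root_.map_pow, aeval_C, hevalb]
          rw [hηω, _root_.map_natCast, hlS]
        have hvS : ((p : ℕ) : S) * lS = lS ^ (p : ℕ) * algebraMap (𝓞 K) S (v : 𝓞 K) := by
          have h17 : (((p : ℕ)) : 𝓞 K) * (ζ - 1) = (ζ - 1) ^ (p : ℕ) * (v : 𝓞 K) := by
            rw [← hv]
            have h18 : (p : ℕ) - 1 + 1 = (p : ℕ) := by omega
            calc (ζ - 1) ^ ((p : ℕ) - 1) * (v : 𝓞 K) * (ζ - 1)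
                = (ζ - 1) ^ ((p : ℕ) - 1) * (ζ - 1) * (v : 𝓞 K) := by ring
              _ = (ζ - 1) ^ ((p : ℕ) - 1 + 1) * (v : 𝓞 K) := by rw [pow_succ]
              _ = (ζ - 1) ^ (p : ℕ) * (v : 𝓞 K) := by rw [h18]
          calc ((p : ℕ) : S) * lS
              = algebraMap (𝓞 K) S ((((p : ℕ)) : 𝓞 K) * (ζ - 1)) := by
                rw [_root_.map_mul, _root_.map_natCast, hlS]
            _ = algebraMap (𝓞 K) S ((ζ - 1) ^ (p : ℕ) * (v : 𝓞 K)) := by rw [h17]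
            _ = lS ^ (p : ℕ) * algebraMap (𝓞 K) S (v : 𝓞 K) := by rw [_root_.map_mul, _root_.map_pow, hlS]
        have hevaldg : Polynomial.aeval η (derivative g)
            = algebraMap (𝓞 K) S (v : 𝓞 K) * ω ^ ((p : ℕ) - 1) := by
          have h20 : Polynomial.aeval η (derivative hpoly)
              = lS ^ (p : ℕ) * Polynomial.aeval η (derivative g) := by
            rw [hderh, _root_.map_mul, aeval_C, _root_.map_pow, hlS]
          have h19 : lS ^ (p : ℕ) * Polynomial.aeval η (derivative g)
              = lS ^ (p : ℕ) * (algebraMap (𝓞 K) S (v : 𝓞 K) * ω ^ ((p : ℕ) - 1)) := by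
            rw [← h20, hevaldh,
              (by ring : ((p : ℕ) : S) * ω ^ ((p : ℕ) - 1) * lS
                = (((p : ℕ) : S) * lS) * ω ^ ((p : ℕ) - 1)), hvS]
            ring
          exact mul_left_cancel₀ (pow_ne_zero _ hlSne) h19
        have h21 : Polynomial.aeval θ (derivative g)
            = algebraMap (𝓞 K) (𝓞 S) (v : 𝓞 K) * ωO ^ ((p : ℕ) - 1) := by
          apply hinjS
          rw [_root_.map_mul, _root_.map_pow, hωOS, ← IsScalarTower.algebraMap_apply (𝓞 K) (𝓞 S) S,
            ← Polynomial.aeval_algebraMap_apply, hθS, hevaldg]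
        rw [h21] at hmem
        have hvunit : IsUnit (algebraMap (𝓞 K) (𝓞 S) (v : 𝓞 K)) :=
          (Units.isUnit v).map (algebraMap (𝓞 K) (𝓞 S))
        have hω1 : ωO ^ ((p : ℕ) - 1) ∈ Q := by
          have h22 := Q.mul_mem_left (↑hvunit.unit⁻¹) hmem
          rwa [← mul_assoc, IsUnit.val_inv_mul, one_mul] at h22
        have hω2 : ωO ∈ Q := hQ.mem_of_pow_mem _ hω1
        have hω3 : ωO ^ (p : ℕ) ∈ Q := by
          have h23 : (p : ℕ) = ((p : ℕ) - 1) + 1 := by omega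
          rw [h23, pow_succ]
          exact Q.mul_mem_left _ hω2
        have h24 : ωO ^ (p : ℕ) = algebraMap (𝓞 K) (𝓞 S) A := by
          apply hinjS
          rw [_root_.map_pow, hωOS, ← IsScalarTower.algebraMap_apply (𝓞 K) (𝓞 S) S,
            IsScalarTower.algebraMap_apply (𝓞 K) K S, ← hω]
        rw [h24] at hω3
        have h25 : A ∈ q := by rw [← hcomap]; exact Ideal.mem_comap.mpr hω3
        exact hval (hqπ ▸ h25)
    · -- a prime `q ≠ π` : rescale `ω` so that the radicand is a unit at `q`
      have h𝔞ne : 𝔞 ≠ ⊥ := by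
        rintro rfl
        exact h𝔞 bot_isPrincipal
      have h𝔞0 : 𝔞 ≠ 0 := h𝔞ne
      have hlt' : q * 𝔞 < 𝔞 := by
        refine lt_of_le_of_ne Ideal.mul_le_right ?_
        intro heq
        have h2 : q * 𝔞 = ⊤ * 𝔞 := by rw [heq, top_mul]
        exact hq.ne_top (mul_right_cancel₀ h𝔞0 h2)
      obtain ⟨d, hd𝔞, hdq𝔞⟩ := SetLike.exists_of_lt hlt'
      have hdne : d ≠ 0 := fun h0 => hdq𝔞 (h0 ▸ zero_mem _)
      obtain ⟨𝔟, h𝔟⟩ : 𝔞 ∣ Ideal.span {d} :=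
        Ideal.dvd_iff_le.mpr ((Ideal.span_singleton_le_iff_mem _).mpr hd𝔞)
      have h𝔟q : ¬ 𝔟 ≤ q := by
        intro hle'
        apply hdq𝔞
        have h3 : Ideal.span {d} ≤ 𝔞 * q := h𝔟 ▸ Ideal.mul_mono_right hle'
        have h4 : d ∈ 𝔞 * q := h3 (Ideal.mem_span_singleton_self d)
        rwa [mul_comm] at h4
      obtain ⟨c, hc𝔟, hcq⟩ := SetLike.not_le_iff_exists.mp h𝔟q
      have hcne : c ≠ 0 := fun h0 => hcq (h0 ▸ zero_mem _)
      obtain ⟨B, hB⟩ : d ^ (p : ℕ) ∣ A * c ^ (p : ℕ) := by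
        rw [← Ideal.mem_span_singleton]
        have h5 : Ideal.span {A * c ^ (p : ℕ)} ≤ Ideal.span {d ^ (p : ℕ)} := by
          rw [← Ideal.span_singleton_mul_span_singleton, ← Ideal.span_singleton_pow,
            ← Ideal.span_singleton_pow, hsing, h𝔟, mul_pow]
          exact Ideal.mul_mono le_rfl
            (Ideal.pow_right_mono ((Ideal.span_singleton_le_iff_mem _).mpr hc𝔟) _)
        exact h5 (Ideal.mem_span_singleton_self _)
      have hBq : B ∉ q := by
        intro hBq
        have h6 : Ideal.span {A * c ^ (p : ℕ)} = Ideal.span {d ^ (p : ℕ) * B} := by rw [hB]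
        rw [← Ideal.span_singleton_mul_span_singleton, ← Ideal.span_singleton_pow, hsing,
          ← Ideal.span_singleton_mul_span_singleton, ← Ideal.span_singleton_pow, h𝔟,
          mul_pow] at h6
        rw [mul_assoc] at h6
        have hcancel : Ideal.span {c} ^ (p : ℕ) = 𝔟 ^ (p : ℕ) * Ideal.span {B} :=
          mul_left_cancel₀ (pow_ne_zero _ h𝔞0) h6
        have h7 : c ^ (p : ℕ) ∈ q := by
          have h8 : Ideal.span {c} ^ (p : ℕ) ≤ q := by
            rw [hcancel]
            exact le_trans Ideal.mul_le_right ((Ideal.span_singleton_le_iff_mem _).mpr hBq)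
          exact h8 (by rw [Ideal.span_singleton_pow]; exact Ideal.mem_span_singleton_self _)
        exact hcq (hq.mem_of_pow_mem _ h7)
      set cS : S := algebraMap (𝓞 K) S c with hcS
      set dS : S := algebraMap (𝓞 K) S d with hdS
      have hcSne : cS ≠ 0 := fun h0 => hcne (hinjKS (by simpa [hcS] using h0))
      have hdSne : dS ≠ 0 := fun h0 => hdne (hinjKS (by simpa [hdS] using h0))
      set η : S := ω * cS / dS with hη
      have hAS : algebraMap (𝓞 K) S A = ω ^ (p : ℕ) := by
        rw [IsScalarTower.algebraMap_apply (𝓞 K) K S, ← hω]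
      have hηp : η ^ (p : ℕ) = algebraMap (𝓞 K) S B := by
        have h9 : algebraMap (𝓞 K) S (A * c ^ (p : ℕ))
            = algebraMap (𝓞 K) S (d ^ (p : ℕ) * B) := by rw [hB]
        rw [_root_.map_mul, _root_.map_mul, _root_.map_pow, _root_.map_pow, hAS, ← hcS, ← hdS] at h9
        rw [hη, div_pow, div_eq_iff (pow_ne_zero _ hdSne), mul_pow, h9]
        ring
      have hηint : IsIntegral (𝓞 K) η := by
        refine ⟨X ^ (p : ℕ) - C B, monic_X_pow_sub_C _ (by omega), ?_⟩
        rw [eval₂_sub, eval₂_pow, eval₂_X, eval₂_C, hηp, sub_self]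
      have hθtop : Algebra.adjoin K {η} = ⊤ := by
        rw [eq_top_iff, ← hgen]
        apply Algebra.adjoin_le
        rw [Set.singleton_subset_iff]
        have hω2 : ω = η * (dS / cS) := by
          rw [hη]; field_simp
        rw [hω2]
        refine mul_mem (Algebra.self_mem_adjoin_singleton K η) ?_
        have h10 : dS / cS = algebraMap K S (algebraMap (𝓞 K) K d / algebraMap (𝓞 K) K c) := by
          rw [_root_.map_div₀, ← IsScalarTower.algebraMap_apply, ← IsScalarTower.algebraMap_apply]
        rw [h10]
        exact Subalgebra.algebraMap_mem _ _
      refine ⟨⟨η, aux_int_int hηint⟩, hθtop, ?_⟩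
      set θ : 𝓞 S := (⟨η, aux_int_int hηint⟩ : 𝓞 S) with hθ
      have hθS : algebraMap (𝓞 S) S θ = η := rfl
      have hminK : minpoly K η = X ^ (p : ℕ) - C (algebraMap (𝓞 K) K B) := by
        refine aux_minpoly_field (monic_X_pow_sub_C _ (by omega)) ?_ ?_ hθtop
        · rw [_root_.map_sub, _root_.map_pow, aeval_X, aeval_C, hηp,
            IsScalarTower.algebraMap_apply (𝓞 K) K S, sub_self]
        · simp [hfinrank]
      have hminO : minpoly (𝓞 K) θ = X ^ (p : ℕ) - C B := by
        apply aux_minpoly_int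
        rw [Polynomial.map_sub, Polynomial.map_pow, Polynomial.map_X, Polynomial.map_C, hθS,
          hminK]
      intro hmem
      rw [hminO] at hmem
      have hd1 : derivative (X ^ (p : ℕ) - C B)
          = C (((p : ℕ) : 𝓞 K)) * X ^ ((p : ℕ) - 1) := by
        rw [derivative_sub, derivative_C, sub_zero, derivative_X_pow]
      rw [hd1, _root_.map_mul, aeval_C, _root_.map_pow, aeval_X] at hmem
      rcases hQ.mem_or_mem hmem with hp' | hθ'
      · have h10 : ((p : ℕ) : 𝓞 K) ∈ q := by
          rw [← hcomap]
          exact Ideal.mem_comap.mpr hp'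
        exact hqπ (hqp_eq_pi q hq h10)
      · have hθQ : θ ∈ Q := hQ.mem_of_pow_mem _ hθ'
        have h11 : θ ^ (p : ℕ) ∈ Q := by
          have h23 : (p : ℕ) = ((p : ℕ) - 1) + 1 := by omega
          rw [h23, pow_succ]
          exact Q.mul_mem_left _ hθQ
        have hcoe : θ ^ (p : ℕ) = algebraMap (𝓞 K) (𝓞 S) B := by
          apply hinjS
          rw [_root_.map_pow, hθS, hηp, ← IsScalarTower.algebraMap_apply (𝓞 K) (𝓞 S) S]
        rw [hcoe] at h11
        have h12 : B ∈ q := by rw [← hcomap]; exact Ideal.mem_comap.mpr h11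
        exact hBq h12
  obtain ⟨θ, hθtop, hθder⟩ := main
  -- ramification computation via the different ideal
  have hQbot : Q ≠ ⊥ := by
    rintro rfl
    rw [Ideal.comap_bot_of_injective _ hinj2] at hcomap
    exact hqbot hcomap.symm
  have hle : Ideal.map (algebraMap (𝓞 K) (𝓞 S)) q ≤ Q := Ideal.map_le_iff_le_comap.mpr hcomap.ge
  have hmapbot : Ideal.map (algebraMap (𝓞 K) (𝓞 S)) q ≠ ⊥ := fun h =>
    hqbot ((Ideal.map_eq_bot_iff_of_injective hinj2).mp h)
  have hne0 : Ideal.ramificationIdx' q Q ≠ 0 :=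
    Ideal.IsDedekindDomain.ramificationIdx'_ne_zero hmapbot hQ hle
  have hnle : ¬ Ideal.map (algebraMap (𝓞 K) (𝓞 S)) q ≤ Q ^ 2 := by
    intro hle2
    haveI : CharZero (FractionRing (𝓞 K)) :=
      charZero_of_injective_algebraMap (IsFractionRing.injective (𝓞 K) _)
    haveI : Algebra.IsSeparable (FractionRing (𝓞 K)) (FractionRing (𝓞 S)) := by
      haveI : IsLocalization (Algebra.algebraMapSubmonoid (𝓞 S) (𝓞 K)⁰) (FractionRing (𝓞 S)) :=
        IsIntegralClosure.isLocalization _ (FractionRing (𝓞 K)) _ _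
      haveI : FiniteDimensional (FractionRing (𝓞 K)) (FractionRing (𝓞 S)) :=
        Module.Finite.of_isLocalization (𝓞 K) (𝓞 S) (𝓞 K)⁰
      haveI : Algebra.IsAlgebraic (FractionRing (𝓞 K)) (FractionRing (𝓞 S)) :=
        Algebra.IsAlgebraic.of_finite _ _
      exact Algebra.IsAlgebraic.isSeparable_of_perfectField
    have hdvd : Q ^ 2 ∣ Ideal.map (algebraMap (𝓞 K) (𝓞 S)) q := Ideal.dvd_iff_le.mpr hle2
    have h1 : Q ^ (2 - 1) ∣ differentIdeal (𝓞 K) (𝓞 S) :=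
      pow_sub_one_dvd_differentIdeal (𝓞 K) Q 2 hqbot hdvd
    rw [pow_one] at h1
    have h2 : Polynomial.aeval θ (derivative (minpoly (𝓞 K) θ)) ∈ differentIdeal (𝓞 K) (𝓞 S) :=
      aeval_derivative_mem_differentIdeal (𝓞 K) K S θ hθtop
    exact hθder (Ideal.dvd_iff_le.mp h1 h2)
  have hlt : Ideal.ramificationIdx' q Q < 2 :=
    Ideal.ramificationIdx'_lt hnle
  omega
end

section
/- Let A be a singular primary integer of K normalized so that A ≡ 1 mod π^{p+1}. Let ω = A^{1/p}, S = K(ω) (of degree p over K), let θ : ω → ωζ be the K-automorphism generating Gal(S/K), and let Π be a prime ideal of Z_S lying above π, so that π·Z_S = ∏_{l=0}^{p-1} θ^l(Π) with the θ^l(Π) pairwise distinct. Then there exists exactly one prime ideal π₀ among the p primes θ^l(Π) of Z_S lying above π such that ω ≡ 1 mod π₀²; for every other prime Π' of Z_S above π one has ω ≢ 1 mod Π'². -/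
open NumberField Ideal

theorem aux_not_pow_dvd_prod {M : Type*} [CommMonoidWithZero M] [IsCancelMulZero M] {P : M} (hP : Prime P)
    {ι : Type*} (s : Finset ι) (a : ι → M) (h0 : ∀ i ∈ s, a i ≠ 0)
    (h2 : ∀ i ∈ s, ¬ P ^ 2 ∣ a i) : ¬ P ^ (s.card + 1) ∣ ∏ i ∈ s, a i := by
  classical
  induction s using Finset.induction with
  | empty =>
    simp only [Finset.card_empty, Finset.prod_empty, zero_add, pow_one]
    exact fun h => hP.not_unit (isUnit_of_dvd_one h)
  | @insert i s' hi ih =>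
    intro hdvd
    rw [Finset.prod_insert hi, Finset.card_insert_of_notMem hi] at hdvd
    have ih' := ih (fun j hj => h0 j (Finset.mem_insert_of_mem hj))
      (fun j hj => h2 j (Finset.mem_insert_of_mem hj))
    by_cases hPa : P ∣ a i
    · obtain ⟨b, hb⟩ := hPa
      have hPb : ¬ P ∣ b := by
        rintro ⟨c, hc⟩
        exact h2 i (Finset.mem_insert_self i s') ⟨c, by rw [hb, hc, sq, mul_assoc]⟩
      rw [hb, mul_assoc] at hdvd
      have h1 : P ^ (s'.card + 1) ∣ b * ∏ j ∈ s', a j :=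
        (mul_dvd_mul_iff_left hP.ne_zero).mp (by rwa [pow_succ'] at hdvd)
      exact ih' (hP.pow_dvd_of_dvd_mul_left _ hPb h1)
    · have h1 : P ^ (s'.card + 1 + 1) ∣ ∏ j ∈ s', a j :=
        hP.pow_dvd_of_dvd_mul_left _ hPa hdvd
      exact ih' ((pow_dvd_pow P (Nat.le_succ _)).trans h1)

/-- Let `A` be a singular primary integer of `K` normalized so that
`A ≡ 1 mod π^(p+1)`, `ω = A^{1/p}`, `S = K(ω)`, `θ : ω ↦ ωζ` the generator of
`Gal(S/K)`, and `Π` a prime of `Z_S` above `π`, so that `π ⬝ Z_S = ∏_{l<p} θ^l(Π)` with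
the `θ^l(Π)` pairwise distinct. Then among the `p` primes `θ^l(Π)` of `Z_S` above `π`
there is exactly one, `π₀`, with `ω ≡ 1 mod π₀²` (for all the others `ω ≢ 1 mod Π'²`). -/
theorem exists_unique_prime_omega_congr_one_sq
    (p : ℕ+) (hp : (p : ℕ).Prime) (hodd : Odd (p : ℕ))
    (K : Type*) [Field K] [NumberField K] [IsCyclotomicExtension {(p : ℕ)} ℚ K]
    (hirr : (p : ℕ) ∣ classNumber K)
    (ζ : 𝓞 K) (hζ : IsPrimitiveRoot ζ p)
    (π : Ideal (𝓞 K)) (hπ : π = Ideal.span {ζ - 1})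
    (A : 𝓞 K)
    (hval : A ∉ π)
    (hnotp : ¬ ∃ B : K, B ^ (p : ℕ) = (A : K))
    (𝔞 : Ideal (𝓞 K)) (h𝔞 : ¬ 𝔞.IsPrincipal)
    (hsing : Ideal.span {A} = 𝔞 ^ (p : ℕ))
    -- `A` singular primary, normalized so that `A ≡ 1 mod π^(p+1)`
    (hnorm : A - 1 ∈ π ^ ((p : ℕ) + 1))
    -- `S = K(ω)` where `ω = A^{1/p}` (so `ω ∈ 𝓞 S`)
    (S : Type*) [Field S] [NumberField S] [Algebra K S]
    (ω : 𝓞 S) (hω : ω ^ (p : ℕ) = algebraMap (𝓞 K) (𝓞 S) A)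
    (hgen : Algebra.adjoin K {(ω : S)} = ⊤)
    -- `θ : ω ↦ ωζ` is the `K`-automorphism generating `Gal(S/K)`
    (θ : S ≃ₐ[K] S) (hθ : θ (ω : S) = algebraMap K S (ζ : K) * (ω : S))
    -- `Π` is a prime of `Z_S` above `π`, and `π Z_S = ∏_{l<p} θ^l(Π)`, pairwise distinct
    (𝔓 : Ideal (𝓞 S)) (h𝔓 : 𝔓.IsPrime)
    (hsplit : Ideal.map (algebraMap (𝓞 K) (𝓞 S)) π =
      ∏ l ∈ Finset.range p, Ideal.map (RingOfIntegers.mapRingHom ((θ ^ l : S ≃ₐ[K] S) : S →+* S)) 𝔓)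
    (hdist : ∀ l < (p : ℕ), ∀ l' < (p : ℕ),
      Ideal.map (RingOfIntegers.mapRingHom ((θ ^ l : S ≃ₐ[K] S) : S →+* S)) 𝔓 =
        Ideal.map (RingOfIntegers.mapRingHom ((θ ^ l' : S ≃ₐ[K] S) : S →+* S)) 𝔓 → l = l') :
    ∃! π₀ : Ideal (𝓞 S),
      (∃ l < (p : ℕ), π₀ = Ideal.map (RingOfIntegers.mapRingHom ((θ ^ l : S ≃ₐ[K] S) : S →+* S)) 𝔓) ∧
        ω - 1 ∈ π₀ ^ 2 := by
  classical
  have hppos : 0 < (p : ℕ) := p.pos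
  set φ : 𝓞 K →+* 𝓞 S := algebraMap (𝓞 K) (𝓞 S) with hφdef
  -- injectivity of φ
  have hφinj : Function.Injective φ := by
    intro x y hxy
    have h1 : algebraMap K S (x : K) = algebraMap K S (y : K) :=
      congrArg (fun z : 𝓞 S => (z : S)) hxy
    have h2 : (x : K) = (y : K) := (algebraMap K S).injective h1
    exact RingOfIntegers.coe_injective (by exact_mod_cast h2)
  set c : 𝓞 S := φ ζ with hcdef
  have hcS : (c : S) = algebraMap K S (ζ : K) := rfl
  have hcprim : IsPrimitiveRoot c (p : ℕ) := hζ.map_of_injective hφinj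
  have hcp : c ^ (p : ℕ) = 1 := hcprim.pow_eq_one
  have hcpow : ∀ a : ℕ, c ^ a = c ^ (a % (p : ℕ)) := by
    intro a
    conv_lhs => rw [← Nat.div_add_mod a (p : ℕ)]
    rw [pow_add, pow_mul, hcp, one_pow, one_mul]
  have hc1 : c ≠ 1 := by
    intro h
    exact hζ.ne_one hp.one_lt (hφinj (by rw [map_one]; exact h))
  have hcm1ne : c - 1 ≠ 0 := sub_ne_zero_of_ne hc1
  -- the conjugate maps
  have hσbij : ∀ l : ℕ, Function.Bijective (RingOfIntegers.mapRingHom ((θ ^ l : S ≃ₐ[K] S) : S →+* S)) := by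
    intro l
    exact (RingOfIntegers.mapRingEquiv ((θ ^ l : S ≃ₐ[K] S) : S ≃+* S)).bijective
  have hQ0 : Ideal.map (RingOfIntegers.mapRingHom ((θ ^ 0 : S ≃ₐ[K] S) : S →+* S)) 𝔓 = 𝔓 := by
    have h1 : RingOfIntegers.mapRingHom ((θ ^ 0 : S ≃ₐ[K] S) : S →+* S) = RingHom.id (𝓞 S) := by
      ext x; rfl
    rw [h1, Ideal.map_id]
  have hπmap : Ideal.map φ π = span {c - 1} := by
    rw [hπ, Ideal.map_span, Set.image_singleton, map_sub, map_one]
  have hπle : Ideal.map φ π ≤ 𝔓 := by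
    rw [hsplit]
    have h0 : ((Finset.range (p : ℕ)).inf fun l =>
        Ideal.map (RingOfIntegers.mapRingHom ((θ ^ l : S ≃ₐ[K] S) : S →+* S)) 𝔓) ≤
        Ideal.map (RingOfIntegers.mapRingHom ((θ ^ 0 : S ≃ₐ[K] S) : S →+* S)) 𝔓 :=
      Finset.inf_le (Finset.mem_range.mpr hppos)
    rw [hQ0] at h0
    exact le_trans Ideal.prod_le_inf h0
  have hcm1𝔓 : c - 1 ∈ 𝔓 := by
    apply hπle
    rw [hπmap]
    exact Ideal.mem_span_singleton_self _
  have h𝔓bot : 𝔓 ≠ ⊥ := by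
    intro h
    rw [h, Ideal.mem_bot] at hcm1𝔓
    exact hcm1ne hcm1𝔓
  have hPprime : Prime 𝔓 := Ideal.prime_of_isPrime h𝔓bot h𝔓
  have hQprime : ∀ l : ℕ, (Ideal.map (RingOfIntegers.mapRingHom ((θ ^ l : S ≃ₐ[K] S) : S →+* S)) 𝔓).IsPrime := by
    intro l
    apply Ideal.map_isPrime_of_surjective (hσbij l).2
    intro x hx
    have hx0 : x = 0 := by
      apply (hσbij l).1
      rw [map_zero]
      exact hx
    rw [hx0]; exact 𝔓.zero_mem
  have hQbot : ∀ l : ℕ, Ideal.map (RingOfIntegers.mapRingHom ((θ ^ l : S ≃ₐ[K] S) : S →+* S)) 𝔓 ≠ ⊥ := by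
    intro l h
    have h1 := Ideal.mem_map_of_mem (RingOfIntegers.mapRingHom ((θ ^ l : S ≃ₐ[K] S) : S →+* S)) hcm1𝔓
    rw [h, Ideal.mem_bot] at h1
    exact hcm1ne ((map_eq_zero_iff _ (hσbij l).1).mp h1)
  have hQmax : ∀ l : ℕ, (Ideal.map (RingOfIntegers.mapRingHom ((θ ^ l : S ≃ₐ[K] S) : S →+* S)) 𝔓).IsMaximal :=
    fun l => (hQprime l).isMaximal (hQbot l)
  -- c - 1 is not in 𝔓 ^ 2
  have hcm1sq : c - 1 ∉ 𝔓 ^ 2 := by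
    intro hmem
    have h1 : span {c - 1} = 𝔓 * ∏ l ∈ (Finset.range (p : ℕ)).erase 0,
        Ideal.map (RingOfIntegers.mapRingHom ((θ ^ l : S ≃ₐ[K] S) : S →+* S)) 𝔓 := by
      rw [← hπmap, hsplit, ← Finset.mul_prod_erase _ _ (Finset.mem_range.mpr hppos), hQ0]
    have hrest : ¬ (∏ l ∈ (Finset.range (p : ℕ)).erase 0,
        Ideal.map (RingOfIntegers.mapRingHom ((θ ^ l : S ≃ₐ[K] S) : S →+* S)) 𝔓 ≤ 𝔓) := by
      intro hle
      obtain ⟨l, hl, hle2⟩ := (Ideal.IsPrime.prod_le h𝔓).mp hle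
      have heq : Ideal.map (RingOfIntegers.mapRingHom ((θ ^ l : S ≃ₐ[K] S) : S →+* S)) 𝔓 = 𝔓 :=
        (hQmax l).eq_of_le h𝔓.ne_top hle2
      have hl0 := hdist l (Finset.mem_range.mp (Finset.mem_of_mem_erase hl)) 0 hppos
        (by rw [heq, hQ0])
      exact (Finset.ne_of_mem_erase hl) hl0
    have hdvd : 𝔓 ^ 2 ∣ 𝔓 * ∏ l ∈ (Finset.range (p : ℕ)).erase 0,
        Ideal.map (RingOfIntegers.mapRingHom ((θ ^ l : S ≃ₐ[K] S) : S →+* S)) 𝔓 := by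
      rw [← h1]
      exact Ideal.dvd_span_singleton.mpr hmem
    rw [sq] at hdvd
    have h𝔓0 : 𝔓 ≠ 0 := by rwa [Ideal.zero_eq_bot]
    have h2 := (mul_dvd_mul_iff_left h𝔓0).mp hdvd
    exact hrest (Ideal.le_of_dvd h2)
  -- geometric sum facts
  have hck𝔓 : ∀ k : ℕ, c ^ k - 1 ∈ 𝔓 := by
    intro k
    rw [← geom_sum_mul c k]
    exact Ideal.mul_mem_left _ _ hcm1𝔓
  have hsum0 : (∑ i ∈ Finset.range (p : ℕ), c ^ i) = 0 := by
    have h := geom_sum_mul c (p : ℕ)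
    rw [hcp, sub_self] at h
    exact (mul_eq_zero.mp h).resolve_right hcm1ne
  have hp𝔓 : (((p : ℕ) : 𝓞 S)) ∈ 𝔓 := by
    have h1 : (((p : ℕ) : 𝓞 S)) = ∑ i ∈ Finset.range (p : ℕ), (1 - c ^ i) := by
      rw [Finset.sum_sub_distrib, hsum0, sub_zero, Finset.sum_const, Finset.card_range,
        nsmul_eq_mul, mul_one]
    rw [h1]
    exact Ideal.sum_mem _ fun i _ => by
      rw [← neg_sub]
      exact neg_mem (hck𝔓 i)
  have hnat𝔓 : ∀ m : ℕ, ¬ (p : ℕ) ∣ m → ((m : 𝓞 S)) ∉ 𝔓 := by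
    intro m hm hmem
    have hcop : Nat.Coprime (p : ℕ) m := (Nat.Prime.coprime_iff_not_dvd hp).mpr hm
    obtain ⟨a, b, hab⟩ := Nat.isCoprime_iff_coprime.mpr hcop
    have h1 : (1 : 𝓞 S) ∈ 𝔓 := by
      have h2 : ((a : ℤ) : 𝓞 S) * ((p : ℕ) : 𝓞 S) + ((b : ℤ) : 𝓞 S) * ((m : ℕ) : 𝓞 S)
          = 1 := by
        have := congrArg (fun z : ℤ => ((z : 𝓞 S))) hab
        push_cast at this
        exact this
      rw [← h2]
      exact add_mem (Ideal.mul_mem_left _ _ hp𝔓) (Ideal.mul_mem_left _ _ hmem)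
    exact h𝔓.ne_top ((Ideal.eq_top_iff_one _).mpr h1)
  -- A' = φ A facts
  have hA'pow : A - 1 ∈ π ^ ((p : ℕ) + 1) := hnorm
  have hA'1 : φ A - 1 ∈ 𝔓 ^ ((p : ℕ) + 1) := by
    have h2 : φ A - 1 = φ (A - 1) := by rw [map_sub, map_one]
    rw [h2]
    have h3 : φ (A - 1) ∈ Ideal.map φ (π ^ ((p : ℕ) + 1)) := Ideal.mem_map_of_mem _ hnorm
    rw [Ideal.map_pow] at h3
    exact Ideal.pow_right_mono hπle _ h3
  have hA'𝔓 : φ A - 1 ∈ 𝔓 := Ideal.pow_le_self (by omega) hA'1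
  have hωm1 : ω - 1 ∈ 𝔓 := by
    obtain ⟨r, hr⟩ := exists_add_pow_prime_eq hp (ω - 1) 1
    rw [sub_add_cancel] at hr
    have h5 : (ω - 1) ^ (p : ℕ) ∈ 𝔓 := by
      have h6 : (ω - 1) ^ (p : ℕ) = (φ A - 1) - ((p : ℕ) : 𝓞 S) * ((ω - 1) * 1 * r) := by
        rw [← hω, hr]; ring
      rw [h6]
      exact sub_mem hA'𝔓 (Ideal.mul_mem_right _ _ hp𝔓)
    exact h𝔓.mem_of_pow_mem _ h5
  have hω𝔓 : ω ∉ 𝔓 := by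
    intro h
    apply h𝔓.ne_top
    rw [Ideal.eq_top_iff_one]
    have := sub_mem h hωm1
    simpa using this
  have hc𝔓 : c ∉ 𝔓 := by
    intro h
    apply h𝔓.ne_top
    rw [Ideal.eq_top_iff_one]
    have := sub_mem h hcm1𝔓
    simpa using this
  -- c ^ m - 1 not in 𝔓 ^ 2 for 0 < m < p
  have hckm1sq : ∀ m : ℕ, 0 < m → m < (p : ℕ) → c ^ m - 1 ∉ 𝔓 ^ 2 := by
    intro m hm0 hmp hmem
    have hg : (∑ i ∈ Finset.range m, c ^ i) * (c - 1) = c ^ m - 1 := geom_sum_mul c m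
    have hg𝔓 : (∑ i ∈ Finset.range m, c ^ i) ∉ 𝔓 := by
      intro hgm
      have h6 : (∑ i ∈ Finset.range m, c ^ i) - ((m : ℕ) : 𝓞 S) ∈ 𝔓 := by
        have h7 : (∑ i ∈ Finset.range m, c ^ i) - ((m : ℕ) : 𝓞 S)
            = ∑ i ∈ Finset.range m, (c ^ i - 1) := by
          rw [Finset.sum_sub_distrib, Finset.sum_const, Finset.card_range,
            nsmul_eq_mul, mul_one]
        rw [h7]
        exact Ideal.sum_mem _ fun i _ => hck𝔓 i
      have h8 : ((m : ℕ) : 𝓞 S) ∈ 𝔓 := by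
        have := sub_mem hgm h6
        simpa using this
      exact hnat𝔓 m (fun hd => absurd (Nat.le_of_dvd hm0 hd) (not_le.mpr hmp)) h8
    have hdvd : 𝔓 ^ 2 ∣ span {(∑ i ∈ Finset.range m, c ^ i)} * span {c - 1} := by
      rw [Ideal.span_singleton_mul_span_singleton, hg]
      exact Ideal.dvd_span_singleton.mpr hmem
    have h7 : 𝔓 ^ 2 ∣ span {c - 1} :=
      hPprime.pow_dvd_of_dvd_mul_left _
        (fun hd => hg𝔓 (Ideal.dvd_span_singleton.mp hd)) hdvd
    exact hcm1sq (Ideal.dvd_span_singleton.mp h7)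
  -- the factors f j = c ^ j * ω - 1
  set f : ℕ → 𝓞 S := fun j => c ^ j * ω - 1 with hfdef
  have hf𝔓 : ∀ j : ℕ, f j ∈ 𝔓 := by
    intro j
    have h1 : f j = c ^ j * (ω - 1) + (c ^ j - 1) := by simp only [hfdef]; ring
    rw [h1]
    exact add_mem (Ideal.mul_mem_left _ _ hωm1) (hck𝔓 j)
  have hfne : ∀ j : ℕ, f j ≠ 0 := by
    intro j h
    have h8 : c ^ j * ω = 1 := by
      have := sub_eq_zero.mp h
      simpa using this
    have h9 : φ A = 1 := by
      have h10 : (c ^ j * ω) ^ (p : ℕ) = 1 := by rw [h8, one_pow]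
      rw [mul_pow, ← pow_mul, mul_comm j (p : ℕ), pow_mul, hcp, one_pow, one_mul, hω] at h10
      exact h10
    have hA1 : A = 1 := hφinj (by rw [map_one]; exact h9)
    have htop : 𝔞 = ⊤ := by
      have h11 : 𝔞 ^ (p : ℕ) = ⊤ := by
        rw [← hsing, hA1, Ideal.span_singleton_one]
      rw [Ideal.eq_top_iff_one]
      exact Ideal.pow_le_self (by omega) (h11 ▸ Submodule.mem_top)
    exact h𝔞 (htop ▸ ⟨⟨1, (Ideal.span_singleton_one).symm⟩⟩)
  have hfd : ∀ j k : ℕ, k < j → j < (p : ℕ) → f j - f k ∉ 𝔓 ^ 2 := by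
    intro j k hkj hjp hmem
    have hjk : f j - f k = (c ^ k * ω) * (c ^ (j - k) - 1) := by
      have h1 : c ^ k * c ^ (j - k) = c ^ j := by
        rw [← pow_add]
        congr 1
        omega
      simp only [hfdef]
      rw [mul_sub, mul_one, ← h1]
      ring
    have hcw : c ^ k * ω ∉ 𝔓 := by
      intro h
      rcases h𝔓.mem_or_mem h with h | h
      · exact hc𝔓 (h𝔓.mem_of_pow_mem _ h)
      · exact hω𝔓 h
    have hdvd : 𝔓 ^ 2 ∣ span {c ^ k * ω} * span {c ^ (j - k) - 1} := by
      rw [Ideal.span_singleton_mul_span_singleton, ← hjk]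
      exact Ideal.dvd_span_singleton.mpr hmem
    have h7 : 𝔓 ^ 2 ∣ span {c ^ (j - k) - 1} :=
      hPprime.pow_dvd_of_dvd_mul_left _
        (fun hd => hcw (Ideal.dvd_span_singleton.mp hd)) hdvd
    exact hckm1sq (j - k) (by omega) (by omega) (Ideal.dvd_span_singleton.mp h7)
  -- mod-p helpers
  have hmodlt : ∀ j : ℕ, ((p : ℕ) - j) % (p : ℕ) < (p : ℕ) := fun j => Nat.mod_lt _ hppos
  have hinv : ∀ j : ℕ, j < (p : ℕ) → ((p : ℕ) - ((p : ℕ) - j) % (p : ℕ)) % (p : ℕ) = j := by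
    intro j hj
    rcases Nat.eq_zero_or_pos j with h0 | h0
    · subst h0
      simp [Nat.sub_zero, Nat.mod_self]
    · have h1 : ((p : ℕ) - j) % (p : ℕ) = (p : ℕ) - j := Nat.mod_eq_of_lt (by omega)
      rw [h1, show (p : ℕ) - ((p : ℕ) - j) = j by omega, Nat.mod_eq_of_lt hj]
  -- the product identity  ∏_{j<p} f j = ω^p - 1
  have hrootseq : Polynomial.nthRootsFinset (p : ℕ) (1 : 𝓞 S)
      = (Finset.range (p : ℕ)).image (c ^ ·) := by
    symm
    apply Finset.eq_of_subset_of_card_le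
    · intro x hx
      obtain ⟨j, hj, rfl⟩ := Finset.mem_image.mp hx
      exact (Polynomial.mem_nthRootsFinset hppos (1 : 𝓞 S)).mpr
        (by rw [← pow_mul, mul_comm, pow_mul, hcp, one_pow])
    · rw [hcprim.card_nthRootsFinset,
        Finset.card_image_of_injOn
          (fun a ha b hb hab => hcprim.pow_inj (Finset.mem_range.mp ha)
            (Finset.mem_range.mp hb) hab),
        Finset.card_range]
  have hprodroots : ∏ j ∈ Finset.range (p : ℕ), (ω - c ^ j) = ω ^ (p : ℕ) - 1 := by
    have h := Polynomial.X_pow_sub_one_eq_prod hppos hcprim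
    have h2 := congrArg (Polynomial.eval ω) h
    simp only [Polynomial.eval_sub, Polynomial.eval_pow, Polynomial.eval_X,
      Polynomial.eval_one, Polynomial.eval_prod, Polynomial.eval_C] at h2
    rw [hrootseq, Finset.prod_image
      (fun a ha b hb hab => hcprim.pow_inj (Finset.mem_range.mp ha)
        (Finset.mem_range.mp hb) hab)] at h2
    exact h2.symm
  have hrefl : ∏ j ∈ Finset.range (p : ℕ),
      (ω - c ^ (((p : ℕ) - j) % (p : ℕ))) = ω ^ (p : ℕ) - 1 := by
    rw [← hprodroots]
    apply Finset.prod_bij' (i := fun j _ => ((p : ℕ) - j) % (p : ℕ))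
      (j := fun j _ => ((p : ℕ) - j) % (p : ℕ))
    · intro a ha
      exact Finset.mem_range.mpr (hmodlt a)
    · intro a ha
      exact Finset.mem_range.mpr (hmodlt a)
    · intro a ha
      exact hinv a (Finset.mem_range.mp ha)
    · intro a ha
      exact hinv a (Finset.mem_range.mp ha)
    · intro a ha
      rfl
  have hfval : ∀ j : ℕ, j < (p : ℕ) → f j = c ^ j * (ω - c ^ ((p : ℕ) - j)) := by
    intro j hj
    have h1 : c ^ j * c ^ ((p : ℕ) - j) = 1 := by
      rw [← pow_add, show j + ((p : ℕ) - j) = (p : ℕ) by omega, hcp]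
    simp only [hfdef]
    rw [mul_sub, h1]
  have hprodf : ∏ j ∈ Finset.range (p : ℕ), f j = ω ^ (p : ℕ) - 1 := by
    rw [Finset.prod_congr rfl (fun j hj => hfval j (Finset.mem_range.mp hj)),
      Finset.prod_mul_distrib]
    obtain ⟨k, hk⟩ := hodd
    have hgauss : (∑ j ∈ Finset.range (p : ℕ), j) = (p : ℕ) * k := by
      have h3 := Finset.sum_range_id_mul_two (p : ℕ)
      have hk2 : (p : ℕ) - 1 = 2 * k := by omega
      have h4 : (∑ j ∈ Finset.range (p : ℕ), j) * 2 = ((p : ℕ) * k) * 2 := by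
        rw [h3, hk2]; ring
      exact Nat.mul_right_cancel (by norm_num) h4
    have hcone : ∏ j ∈ Finset.range (p : ℕ), c ^ j = 1 := by
      rw [Finset.prod_pow_eq_pow_sum, hgauss, pow_mul, hcp, one_pow]
    rw [hcone, one_mul]
    rw [Finset.prod_congr rfl
      (fun j hj => by rw [hcpow ((p : ℕ) - j)] :
        ∀ j ∈ Finset.range (p : ℕ), (ω - c ^ ((p : ℕ) - j))
          = (ω - c ^ (((p : ℕ) - j) % (p : ℕ))))]
    exact hrefl
  -- the core statement: there is exactly one j < p with f j ∈ 𝔓 ^ 2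
  have hcore : ∃! j : ℕ, j < (p : ℕ) ∧ f j ∈ 𝔓 ^ 2 := by
    have hex : ∃ j : ℕ, j < (p : ℕ) ∧ f j ∈ 𝔓 ^ 2 := by
      by_contra hno
      push_neg at hno
      apply aux_not_pow_dvd_prod hPprime (Finset.range (p : ℕ)) (fun j => span {f j})
        (fun j _ => by
          rw [Ideal.zero_eq_bot, Ne, Ideal.span_singleton_eq_bot]
          exact hfne j)
        (fun j hj hd => hno j (Finset.mem_range.mp hj) (Ideal.dvd_span_singleton.mp hd))
      rw [Finset.card_range, Ideal.prod_span_singleton, hprodf]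
      apply Ideal.dvd_span_singleton.mpr
      have : ω ^ (p : ℕ) - 1 = φ A - 1 := by rw [hω]
      rw [this]
      exact hA'1
    obtain ⟨j₀, hj₀⟩ := hex
    refine ⟨j₀, hj₀, fun y hy => ?_⟩
    by_contra hne
    rcases Nat.lt_or_ge y j₀ with hlt | hge
    · exact hfd j₀ y hlt hj₀.1 (sub_mem hj₀.2 hy.2)
    · exact hfd y j₀ (by omega) hy.1 (sub_mem hy.2 hj₀.2)
  -- translation between f and the conjugate primes
  have hθpow : ∀ l : ℕ, (θ ^ l) (ω : S) = (algebraMap K S (ζ : K)) ^ l * (ω : S) := by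
    intro l
    induction l with
    | zero => simp
    | succ n ihn =>
      rw [pow_succ', AlgEquiv.mul_apply, ihn]
      calc θ ((algebraMap K S (ζ : K)) ^ n * (ω : S))
          = θ ((algebraMap K S (ζ : K)) ^ n) * θ (ω : S) := _root_.map_mul θ _ _
        _ = (algebraMap K S (ζ : K)) ^ n * ((algebraMap K S (ζ : K)) * (ω : S)) := by
            rw [← _root_.map_pow (algebraMap K S), AlgEquiv.commutes,
              _root_.map_pow (algebraMap K S), hθ]
        _ = (algebraMap K S (ζ : K)) ^ (n + 1) * (ω : S) := by ring
  have hσω : ∀ l : ℕ, RingOfIntegers.mapRingHom ((θ ^ l : S ≃ₐ[K] S) : S →+* S) ω = c ^ l * ω := by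
    intro l
    have h1 : ((RingOfIntegers.mapRingHom ((θ ^ l : S ≃ₐ[K] S) : S →+* S) ω : 𝓞 S) : S) = ((c ^ l * ω : 𝓞 S) : S) := by
      show (θ ^ l) (ω : S) = _
      push_cast
      rw [hθpow l, ← hcS]
    exact RingOfIntegers.coe_injective h1
  have hσc : ∀ l : ℕ, RingOfIntegers.mapRingHom ((θ ^ l : S ≃ₐ[K] S) : S →+* S) c = c := by
    intro l
    have h1 : ((RingOfIntegers.mapRingHom ((θ ^ l : S ≃ₐ[K] S) : S →+* S) c : 𝓞 S) : S) = ((c : 𝓞 S) : S) := by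
      show (θ ^ l) (c : S) = _
      rw [hcS]
      exact AlgEquiv.commutes _ _
    exact RingOfIntegers.coe_injective h1
  have hσf : ∀ l : ℕ, l < (p : ℕ) →
      RingOfIntegers.mapRingHom ((θ ^ l : S ≃ₐ[K] S) : S →+* S) (f (((p : ℕ) - l) % (p : ℕ))) = ω - 1 := by
    intro l hl
    simp only [hfdef]
    rw [map_sub, map_one, _root_.map_mul, _root_.map_pow, hσω, hσc, ← mul_assoc, ← pow_add,
      hcpow ((((p : ℕ) - l) % (p : ℕ)) + l)]
    have h1 : ((((p : ℕ) - l) % (p : ℕ)) + l) % (p : ℕ) = 0 := by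
      rcases Nat.eq_zero_or_pos l with h0 | h0
      · subst h0; simp
      · rw [Nat.mod_eq_of_lt (show (p : ℕ) - l < (p : ℕ) by omega),
          show (p : ℕ) - l + l = (p : ℕ) by omega, Nat.mod_self]
    rw [h1, pow_zero, one_mul]
  have hmemmap : ∀ l : ℕ, ∀ I : Ideal (𝓞 S), ∀ x : 𝓞 S,
      RingOfIntegers.mapRingHom ((θ ^ l : S ≃ₐ[K] S) : S →+* S) x ∈ Ideal.map (RingOfIntegers.mapRingHom ((θ ^ l : S ≃ₐ[K] S) : S →+* S)) I
        ↔ x ∈ I := by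
    intro l I x
    constructor
    · intro h
      obtain ⟨y, hy, hyx⟩ := (Ideal.mem_map_iff_of_surjective _ (hσbij l).2).mp h
      rwa [← (hσbij l).1 hyx]
    · exact fun h => Ideal.mem_map_of_mem _ h
  have htrans : ∀ l : ℕ, l < (p : ℕ) →
      ((ω - 1 ∈ (Ideal.map (RingOfIntegers.mapRingHom ((θ ^ l : S ≃ₐ[K] S) : S →+* S)) 𝔓) ^ 2)
        ↔ f (((p : ℕ) - l) % (p : ℕ)) ∈ 𝔓 ^ 2) := by
    intro l hl
    rw [← hσf l hl, ← Ideal.map_pow]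
    exact hmemmap l (𝔓 ^ 2) _
  -- final packaging
  obtain ⟨j₀, ⟨hj₀p, hj₀sq⟩, hj₀u⟩ := hcore
  refine ⟨Ideal.map (RingOfIntegers.mapRingHom (θ ^ (((p : ℕ) - j₀) % (p : ℕ)))) 𝔓,
    ⟨⟨((p : ℕ) - j₀) % (p : ℕ), hmodlt j₀, rfl⟩, ?_⟩, ?_⟩
  · rw [htrans _ (hmodlt j₀), hinv j₀ hj₀p]
    exact hj₀sq
  · rintro π' ⟨⟨l', hl', rfl⟩, hmem'⟩
    have h1 := (htrans l' hl').mp hmem'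
    have h2 : ((p : ℕ) - l') % (p : ℕ) = j₀ := hj₀u _ ⟨hmodlt l', h1⟩
    have h3 := hinv l' hl'
    rw [h2] at h3
    rw [← h3]
end

section
/- Let A be a singular non-primary integer of K (so A is semi-primary but A ≢ a^p mod π^p for every rational integer a), let ω = A^{1/p} and S = K(ω). Then the prime π of K is totally ramified in S/K: π·Z_S = Π^p for a prime ideal Π of Z_S, and moreover ω ≡ 1 mod Π after normalizing A ≡ 1 mod π. -/
set_option maxHeartbeats 1000000

open NumberField Ideal Polynomial UniqueFactorizationMonoid Module

section ValAux

open UniqueFactorizationMonoid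

variable {T : Type*} [CommRing T] [IsDedekindDomain T] [DecidableEq (Ideal T)]

/-- The valuation of an element at a prime ideal of a Dedekind domain, as the multiplicity of
the prime in the normalized factorization of the principal ideal it generates. -/
noncomputable def pVal (P : Ideal T) (x : T) : ℕ :=
  (normalizedFactors (Ideal.span {x})).count P

lemma pow_dvd_iff_le_count {P : Ideal T} (hP : Prime P) {I : Ideal T} (hI : I ≠ ⊥) (k : ℕ) :
    P ^ k ∣ I ↔ k ≤ (normalizedFactors I).count P := by
  rw [dvd_iff_normalizedFactors_le_normalizedFactors (pow_ne_zero _ hP.ne_zero) hI,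
    normalizedFactors_pow, normalizedFactors_irreducible hP.irreducible, normalize_eq,
    Multiset.nsmul_singleton, ← Multiset.le_count_iff_replicate_le]

lemma mem_pow_iff_le_pVal {P : Ideal T} (hP : Prime P) {x : T} (hx : x ≠ 0) (k : ℕ) :
    x ∈ P ^ k ↔ k ≤ pVal P x := by
  rw [← Ideal.span_singleton_le_iff_mem, ← Ideal.dvd_iff_le,
    pow_dvd_iff_le_count hP (by simpa using hx)]
  rfl

@[simp] lemma pVal_one (P : Ideal T) : pVal P 1 = 0 := by
  unfold pVal
  rw [Ideal.span_singleton_one, ← Ideal.one_eq_top, normalizedFactors_one]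
  simp

lemma pVal_unit (P : Ideal T) {u : T} (hu : IsUnit u) : pVal P u = 0 := by
  unfold pVal
  rw [Ideal.span_singleton_eq_top.mpr hu, ← Ideal.one_eq_top, normalizedFactors_one]
  simp

lemma pVal_mul (P : Ideal T) {x y : T} (hx : x ≠ 0) (hy : y ≠ 0) :
    pVal P (x * y) = pVal P x + pVal P y := by
  unfold pVal
  rw [← Ideal.span_singleton_mul_span_singleton,
    normalizedFactors_mul (by simpa using hx) (by simpa using hy), Multiset.count_add]

lemma pVal_pow (P : Ideal T) {x : T} (hx : x ≠ 0) (n : ℕ) :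
    pVal P (x ^ n) = n * pVal P x := by
  induction n with
  | zero => simp
  | succ n ih =>
    rw [pow_succ, pVal_mul P (pow_ne_zero _ hx) hx, ih]
    ring

lemma pVal_prod {ι : Type*} (P : Ideal T) (s : Finset ι) (f : ι → T)
    (hf : ∀ i ∈ s, f i ≠ 0) :
    pVal P (∏ i ∈ s, f i) = ∑ i ∈ s, pVal P (f i) := by
  classical
  induction s using Finset.cons_induction with
  | empty => simp
  | cons a s ha ih =>
    rw [Finset.prod_cons, Finset.sum_cons,
      pVal_mul P (hf a (Finset.mem_cons_self a s))
        (Finset.prod_ne_zero_iff.mpr fun i hi => hf i (Finset.mem_cons_of_mem hi)),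
      ih fun i hi => hf i (Finset.mem_cons_of_mem hi)]

lemma pVal_eq_zero_of_not_mem {P : Ideal T} (hP : Prime P) {x : T} (hx : x ≠ 0)
    (h : x ∉ P) : pVal P x = 0 := by
  by_contra h'
  exact h (by simpa using (mem_pow_iff_le_pVal hP hx 1).mpr (Nat.one_le_iff_ne_zero.mpr h'))

lemma pVal_sub_of_lt {P : Ideal T} (hP : Prime P) {x y : T} (hx : x ≠ 0) (hy : y ≠ 0)
    (h : pVal P x < pVal P y) : pVal P (x - y) = pVal P x := by
  have hxy : x - y ≠ 0 := sub_ne_zero.mpr (fun e => absurd h (by rw [e]; exact lt_irrefl _))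
  refine le_antisymm ?_ ?_
  · by_contra h'
    push_neg at h'
    have h1 : x - y ∈ P ^ (pVal P x + 1) :=
      (mem_pow_iff_le_pVal hP hxy _).mpr (Nat.succ_le_of_lt h')
    have h2 : y ∈ P ^ (pVal P x + 1) :=
      (mem_pow_iff_le_pVal hP hy _).mpr (Nat.succ_le_of_lt h)
    have hxm : x ∈ P ^ (pVal P x + 1) := by
      have := add_mem h1 h2
      simpa using this
    have := (mem_pow_iff_le_pVal hP hx _).mp hxm
    omega
  · refine (mem_pow_iff_le_pVal hP hxy _).mp ?_
    exact sub_mem ((mem_pow_iff_le_pVal hP hx _).mpr le_rfl)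
      ((mem_pow_iff_le_pVal hP hy _).mpr h.le)

end ValAux

/-- Let `A` be a singular non-primary integer of `K` (semi-primary but
`A ≢ a^p mod π^p` for every rational integer `a`), `ω = A^{1/p}` and `S = K(ω)`. Then the
prime `π` of `K` is totally ramified in `S/K`: `π ⬝ Z_S = Π^p` for a prime `Π` of `Z_S`;
moreover, after normalizing `A ≡ 1 mod π`, one has `ω ≡ 1 mod Π`. -/
theorem singular_nonPrimary_totally_ramified
    (p : ℕ+) (hp : (p : ℕ).Prime) (hodd : Odd (p : ℕ))
    (K : Type*) [Field K] [NumberField K] [IsCyclotomicExtension {(p : ℕ)} ℚ K]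
    (hirr : (p : ℕ) ∣ classNumber K)
    (ζ : 𝓞 K) (hζ : IsPrimitiveRoot ζ p)
    (π : Ideal (𝓞 K)) (hπ : π = Ideal.span {ζ - 1})
    (A : 𝓞 K)
    (hval : A ∉ π)
    (hnotp : ¬ ∃ B : K, B ^ (p : ℕ) = (A : K))
    (hsing : ∃ 𝔞 : Ideal (𝓞 K), Ideal.span {A} = 𝔞 ^ (p : ℕ))
    -- `A` is semi-primary
    (hsemi : ∃ a : ℤ, A - (a : 𝓞 K) ∈ π ^ 2)
    -- `A` is non-primary: `A ≢ a^p mod π^p` for every rational integer `a`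
    (hnonprim : ¬ ∃ a : ℤ, A - (a : 𝓞 K) ^ (p : ℕ) ∈ π ^ (p : ℕ))
    -- normalization `A ≡ 1 mod π`
    (hnorm : A - 1 ∈ π)
    -- `S = K(ω)` where `ω = A^{1/p}` (so `ω ∈ 𝓞 S`)
    (S : Type*) [Field S] [NumberField S] [Algebra K S]
    (ω : 𝓞 S) (hω : ω ^ (p : ℕ) = algebraMap (𝓞 K) (𝓞 S) A)
    (hgen : Algebra.adjoin K {(ω : S)} = ⊤) :
    ∃ 𝔓 : Ideal (𝓞 S), 𝔓.IsPrime ∧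
      Ideal.map (algebraMap (𝓞 K) (𝓞 S)) π = 𝔓 ^ (p : ℕ) ∧
      ω - 1 ∈ 𝔓 := by
  classical
  haveI : Fact (Nat.Prime (p : ℕ)) := ⟨hp⟩
  have hp1 : 1 < (p : ℕ) := hp.one_lt
  have hppos : 0 < (p : ℕ) := hp.pos
  -- ζ - 1 is prime
  have hζK : IsPrimitiveRoot ((algebraMap (𝓞 K) K) ζ) p :=
    hζ.map_of_injective (IsFractionRing.injective (𝓞 K) K)
  have hlam : Prime (ζ - 1) := by
    have := hζK.zeta_sub_one_prime'
    have he : hζK.toInteger = ζ := by ext; rfl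
    rwa [he] at this
  have hlam0 : (ζ - 1) ≠ 0 := hlam.ne_zero
  have hπprime : π.IsPrime := by
    rw [hπ]; exact (Ideal.span_singleton_prime hlam0).mpr hlam
  have hπ0 : π ≠ ⊥ := by
    rw [hπ, Ne, Ideal.span_singleton_eq_bot]; exact hlam0
  have hπmax : π.IsMaximal := hπprime.isMaximal hπ0
  have hπPrime : Prime π := Ideal.prime_of_isPrime hπ0 hπprime
  -- A ≠ 1
  have hA1 : A - 1 ≠ 0 := by
    intro h
    exact hnotp ⟨1, by rw [one_pow, show A = 1 from by linear_combination h]; simp⟩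
  -- m = v_π(A-1)
  set m : ℕ := pVal π (A - 1) with hm_def
  have hm1 : 1 ≤ m := by
    refine (mem_pow_iff_le_pVal hπPrime hA1 1).mp ?_
    rw [pow_one]; exact hnorm
  have hmp : m < (p : ℕ) := by
    by_contra h
    push_neg at h
    refine hnonprim ⟨1, ?_⟩
    have h2 : A - 1 ∈ π ^ (p : ℕ) := (mem_pow_iff_le_pVal hπPrime hA1 _).mpr h
    push_cast
    simpa using h2
  -- factor A - 1 = (ζ-1)^m * y with y ∉ π
  have hdvd : (ζ - 1) ^ m ∣ A - 1 := by
    have h1 : A - 1 ∈ π ^ m := (mem_pow_iff_le_pVal hπPrime hA1 m).mpr le_rfl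
    rwa [hπ, Ideal.span_singleton_pow, Ideal.mem_span_singleton] at h1
  obtain ⟨y, hy⟩ := hdvd
  have hy0 : y ≠ 0 := by rintro rfl; simp at hy; exact hA1 hy
  have hyπ : y ∉ π := by
    intro hmem
    have h1 : A - 1 ∈ π ^ (m + 1) := by
      rw [hy, pow_succ]
      refine Ideal.mul_mem_mul ?_ hmem
      rw [hπ, Ideal.span_singleton_pow]
      exact Ideal.mem_span_singleton_self _
    have := (mem_pow_iff_le_pVal hπPrime hA1 _).mp h1
    omega
  -- the extension ring
  set φ : 𝓞 K →+* 𝓞 S := algebraMap (𝓞 K) (𝓞 S) with hφ_def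
  have hφinj : Function.Injective φ := by
    have h1 : Function.Injective (algebraMap (𝓞 K) S) := by
      rw [IsScalarTower.algebraMap_eq (𝓞 K) K S]
      exact (algebraMap K S).injective.comp (IsFractionRing.injective (𝓞 K) K)
    rw [IsScalarTower.algebraMap_eq (𝓞 K) (𝓞 S) S, RingHom.coe_comp] at h1
    exact Function.Injective.of_comp h1
  -- a prime above π
  obtain ⟨PS, hPSmax, hPScomap⟩ := Ideal.exists_ideal_over_maximal_of_isIntegral π
    (by rw [(RingHom.injective_iff_ker_eq_bot _).mp hφinj]; exact bot_le)
  have hPSprime : PS.IsPrime := hPSmax.isPrime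
  have hPS0 : PS ≠ ⊥ := by
    rintro rfl
    rw [← hPScomap, Ideal.comap_bot_of_injective _ hφinj] at hπ0
    exact hπ0 rfl
  have hPSPrime : Prime PS := Ideal.prime_of_isPrime hPS0 hPSprime
  have hle : Ideal.map φ π ≤ PS := Ideal.map_le_iff_le_comap.mpr (le_of_eq hPScomap.symm)
  have hmapbot : Ideal.map φ π ≠ ⊥ := by
    rw [Ne, Ideal.map_eq_bot_iff_of_injective hφinj]; exact hπ0
  -- e
  set e : ℕ := (normalizedFactors (Ideal.map φ π)).count PS with he_def
  have he1 : 1 ≤ e := by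
    rw [← pow_dvd_iff_le_count hPSPrime hmapbot 1, pow_one]
    exact Ideal.dvd_iff_le.mpr hle
  have hvlam : pVal PS (φ (ζ - 1)) = e := by
    unfold pVal
    rw [he_def, hπ, Ideal.map_span, Set.image_singleton]

  -- nonvanishing of ω - φ ξ for p-th roots of unity ξ
  have hAe : φ (A - 1) ≠ 0 := fun h => hA1 (hφinj (by rw [h, map_zero]))
  have hne : ∀ ξ ∈ nthRootsFinset (p : ℕ) (1 : 𝓞 K), ω - φ ξ ≠ 0 := by
    intro ξ hξ h
    have hξp : ξ ^ (p : ℕ) = 1 := (mem_nthRootsFinset hppos 1).mp hξ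
    have hωξ : ω = φ ξ := sub_eq_zero.mp h
    have h2 : φ A = φ 1 := by rw [map_one, ← hω, hωξ, ← map_pow, hξp, map_one]
    exact hA1 (by rw [hφinj h2, sub_self])
  -- the product identity  φ(A-1) = ∏ (ω - φ ξ)
  have hpoly : (X : (𝓞 K)[X]) ^ (p : ℕ) - 1 =
      ∏ ξ ∈ nthRootsFinset (p : ℕ) (1 : 𝓞 K), (X - C ξ) := X_pow_sub_one_eq_prod hppos hζ
  have hprod : φ (A - 1) = ∏ ξ ∈ nthRootsFinset (p : ℕ) (1 : 𝓞 K), (ω - φ ξ) := by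
    have h2 := congrArg (aeval (ω : 𝓞 S)) hpoly
    simp only [map_sub, map_pow, map_one, aeval_X, map_prod, aeval_C] at h2
    rw [map_sub, map_one, ← hω]
    rw [← hφ_def] at h2
    exact h2
  -- valuation of images of ξ - 1, ξ ≠ 1
  have hvroot : ∀ ξ ∈ nthRootsFinset (p : ℕ) (1 : 𝓞 K), ξ ≠ 1 →
      pVal PS (φ (ξ - 1)) = e ∧ φ (ξ - 1) ≠ 0 := by
    intro ξ hξ hξ1
    have hξp : ξ ^ (p : ℕ) = 1 := (mem_nthRootsFinset hppos 1).mp hξ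
    have horder : orderOf ξ = (p : ℕ) := by
      rcases hp.eq_one_or_self_of_dvd _ (orderOf_dvd_of_pow_eq_one hξp) with h | h
      · exact absurd (orderOf_eq_one_iff.mp h) hξ1
      · exact h
    have hξprim : IsPrimitiveRoot ξ (p : ℕ) := horder ▸ IsPrimitiveRoot.orderOf ξ
    obtain ⟨i, hi, hζi⟩ := hζ.eq_pow_of_pow_eq_one hξp
    obtain ⟨j, hj, hξj⟩ := hξprim.eq_pow_of_pow_eq_one hζ.pow_eq_one
    have d1 : (ζ - 1) ∣ (ξ - 1) :=
      ⟨∑ k ∈ Finset.range i, ζ ^ k, by rw [← hζi, ← geom_sum_mul, mul_comm]⟩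
    have d2 : (ξ - 1) ∣ (ζ - 1) :=
      ⟨∑ k ∈ Finset.range j, ξ ^ k, by rw [← hξj, ← geom_sum_mul, mul_comm]⟩
    obtain ⟨u, hu⟩ := associated_of_dvd_dvd d1 d2
    have hξeq : ξ - 1 = (ζ - 1) * u := hu.symm
    have hunit : IsUnit (φ (u : 𝓞 K)) := (Units.isUnit u).map φ
    have hu0 : φ (u : 𝓞 K) ≠ 0 := hunit.ne_zero
    have hl0 : φ (ζ - 1) ≠ 0 := fun h => hlam0 (hφinj (by rw [h, map_zero]))
    constructor
    · rw [hξeq, _root_.map_mul, pVal_mul PS hl0 hu0, hvlam, pVal_unit PS hunit, add_zero]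
    · rw [hξeq, _root_.map_mul]
      exact mul_ne_zero hl0 hu0
  -- y is a unit at PS
  have hyPS : φ y ∉ PS := by
    intro h
    exact hyπ (by rw [← hPScomap]; exact Ideal.mem_comap.mpr h)
  have hy0T : φ y ≠ 0 := fun h => hy0 (hφinj (by rw [h, map_zero]))
  -- the key sum identity e * m = ∑ v(ω - φ ξ)
  have hsum : e * m = ∑ ξ ∈ nthRootsFinset (p : ℕ) (1 : 𝓞 K), pVal PS (ω - φ ξ) := by
    rw [← pVal_prod PS _ _ hne, ← hprod, hy, _root_.map_mul, map_pow,
      pVal_mul PS (pow_ne_zero _ (fun h => hlam0 (hφinj (by rw [h, map_zero])))) hy0T,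
      pVal_pow PS (fun h => hlam0 (hφinj (by rw [h, map_zero]))), hvlam,
      pVal_eq_zero_of_not_mem hPSPrime hy0T hyPS, add_zero, mul_comm]
  have h1mem : (1 : 𝓞 K) ∈ nthRootsFinset (p : ℕ) (1 : 𝓞 K) := one_mem_nthRootsFinset hppos
  have hω1 : ω - (1 : 𝓞 S) ≠ 0 := by
    have := hne 1 h1mem
    simpa using this
  -- t < e
  have hte : pVal PS (ω - 1) < e := by
    by_contra h
    push_neg at h
    have hterm : ∀ ξ ∈ nthRootsFinset (p : ℕ) (1 : 𝓞 K), e ≤ pVal PS (ω - φ ξ) := by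
      intro ξ hξ
      by_cases hξ1 : ξ = 1
      · subst hξ1
        simpa [map_one] using h
      · refine (mem_pow_iff_le_pVal hPSPrime (hne ξ hξ) e).mp ?_
        have hsub : ω - φ ξ = (ω - 1) - (φ (ξ - 1)) := by
          rw [map_sub, map_one]; ring
        rw [hsub]
        exact sub_mem ((mem_pow_iff_le_pVal hPSPrime hω1 e).mpr h)
          ((mem_pow_iff_le_pVal hPSPrime (hvroot ξ hξ hξ1).2 e).mpr
            (le_of_eq (hvroot ξ hξ hξ1).1.symm))
    have hge : (p : ℕ) * e ≤ e * m := by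
      rw [hsum]
      have := Finset.card_nsmul_le_sum (nthRootsFinset (p : ℕ) (1 : 𝓞 K))
        (fun ξ => pVal PS (ω - φ ξ)) e hterm
      rwa [hζ.card_nthRootsFinset, smul_eq_mul] at this
    nlinarith [hge, hmp, he1]
  -- all the other valuations equal t
  have hterm2 : ∀ ξ ∈ nthRootsFinset (p : ℕ) (1 : 𝓞 K),
      pVal PS (ω - φ ξ) = pVal PS (ω - 1) := by
    intro ξ hξ
    by_cases hξ1 : ξ = 1
    · subst hξ1; rw [map_one]
    · have hsub : ω - φ ξ = (ω - 1) - (φ (ξ - 1)) := by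
        rw [map_sub, map_one]; ring
      rw [hsub, pVal_sub_of_lt hPSPrime hω1 (hvroot ξ hξ hξ1).2
        (by rw [(hvroot ξ hξ hξ1).1]; exact hte)]
  have hpt : e * m = (p : ℕ) * pVal PS (ω - 1) := by
    rw [hsum, Finset.sum_congr rfl hterm2, Finset.sum_const, hζ.card_nthRootsFinset,
      smul_eq_mul]
  -- p divides e
  have hpm : ¬ (p : ℕ) ∣ m := fun hd => absurd (Nat.le_of_dvd (by omega) hd) (by omega)
  have hpe : (p : ℕ) ∣ e :=
    (Nat.Coprime.dvd_of_dvd_mul_right ((Nat.Prime.coprime_iff_not_dvd hp).mpr hpm)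
      ⟨pVal PS (ω - 1), hpt⟩)
  have hpe' : (p : ℕ) ≤ e := Nat.le_of_dvd (by omega) hpe
  -- the degree of S over K is p
  have hωS : (ω : S) ^ (p : ℕ) = algebraMap K S (A : K) := by
    have h2 : algebraMap (𝓞 S) S (ω ^ (p : ℕ)) = algebraMap (𝓞 S) S (φ A) := congrArg _ hω
    rw [map_pow, hφ_def, ← IsScalarTower.algebraMap_apply (𝓞 K) (𝓞 S) S,
      IsScalarTower.algebraMap_apply (𝓞 K) K S] at h2
    exact h2
  have hAK' : ∀ b : K, b ^ (p : ℕ) ≠ (A : K) := fun b hb => hnotp ⟨b, hb⟩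
  have hirrpoly : Irreducible ((X : K[X]) ^ (p : ℕ) - C (A : K)) :=
    X_pow_sub_C_irreducible_of_prime hp hAK'
  have hroot : (aeval ((ω : S))) ((X : K[X]) ^ (p : ℕ) - C (A : K)) = 0 := by
    rw [map_sub, map_pow, aeval_X, aeval_C, hωS, sub_self]
  have hmono : ((X : K[X]) ^ (p : ℕ) - C (A : K)).Monic := monic_X_pow_sub_C _ (by omega)
  have hint : IsIntegral K ((ω : S)) := ⟨_, hmono, hroot⟩
  have htop : IntermediateField.adjoin K {(ω : S)} = ⊤ := by
    apply IntermediateField.toSubalgebra_injective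
    rw [IntermediateField.adjoin_simple_toSubalgebra_of_isAlgebraic hint.isAlgebraic, hgen,
      IntermediateField.top_toSubalgebra]
  have hfinrank : finrank K S = (p : ℕ) := by
    have h1 := IntermediateField.adjoin.finrank hint
    rw [← minpoly.eq_of_irreducible_of_monic hirrpoly hroot hmono] at h1
    rw [htop, IntermediateField.finrank_top'] at h1
    rw [h1, natDegree_X_pow_sub_C]
  -- the fundamental identity
  haveI : π.IsMaximal := hπmax
  haveI : Module.Finite (𝓞 K) (𝓞 S) := ⟨IsNoetherian.noetherian ⊤⟩
  have hsumEF : ∑ P ∈ (factors (Ideal.map φ π)).toFinset,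
      Ideal.ramificationIdx' π P * Ideal.inertiaDeg' π P = finrank K S :=
    Ideal.sum_ramification_inertia (𝓞 S) K S hπ0
  rw [hfinrank] at hsumEF
  have hPS2mem : PS ∈ (factors (Ideal.map φ π)).toFinset := by
    rw [Multiset.mem_toFinset, factors_eq_normalizedFactors]
    refine Multiset.count_pos.mp ?_
    rw [← he_def]; omega
  haveI : PS.LiesOver π := ⟨hPScomap.symm⟩
  have hramPS : Ideal.ramificationIdx' π PS = e :=
    Ideal.IsDedekindDomain.ramificationIdx'_eq_normalizedFactors_count hmapbot hPSprime hPS0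
  have hfPS : 0 < Ideal.inertiaDeg' π PS := Ideal.inertiaDeg'_pos π PS
  -- every factor equals PS
  have huniq : ∀ Q ∈ (factors (Ideal.map φ π)).toFinset, Q = PS := by
    intro Q hQ
    by_contra hneQ
    have hQ' : Q ∈ normalizedFactors (Ideal.map φ π) := by
      rwa [Multiset.mem_toFinset, factors_eq_normalizedFactors] at hQ
    have hQPrime : Prime Q := prime_of_normalized_factor _ hQ'
    have hQprime : Q.IsPrime := Ideal.isPrime_of_prime hQPrime
    have hQle : Ideal.map φ π ≤ Q := Ideal.le_of_dvd (dvd_of_mem_normalizedFactors hQ')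
    have hram0 : Ideal.ramificationIdx' π Q ≠ 0 :=
      Ideal.IsDedekindDomain.ramificationIdx'_ne_zero hmapbot hQprime hQle
    haveI : Q.LiesOver π := by
      constructor
      haveI := hQprime
      have h2 : (Ideal.comap φ Q).IsPrime := Ideal.IsPrime.comap φ
      exact hπmax.eq_of_le h2.ne_top (Ideal.map_le_iff_le_comap.mp hQle)
    have hfQ : 0 < Ideal.inertiaDeg' π Q := Ideal.inertiaDeg'_pos π Q
    have hsplit : Ideal.ramificationIdx' π PS * Ideal.inertiaDeg' π PS +
        ∑ P ∈ (factors (Ideal.map φ π)).toFinset.erase PS,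
          Ideal.ramificationIdx' π P * Ideal.inertiaDeg' π P =
        ∑ P ∈ (factors (Ideal.map φ π)).toFinset,
          Ideal.ramificationIdx' π P * Ideal.inertiaDeg' π P :=
      Finset.add_sum_erase _
        (fun P => Ideal.ramificationIdx' π P * Ideal.inertiaDeg' π P) hPS2mem
    have hQerase : Q ∈ (factors (Ideal.map φ π)).toFinset.erase PS :=
      Finset.mem_erase.mpr ⟨hneQ, hQ⟩
    have hle2 : Ideal.ramificationIdx' π Q * Ideal.inertiaDeg' π Q ≤
        ∑ P ∈ (factors (Ideal.map φ π)).toFinset.erase PS,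
          Ideal.ramificationIdx' π P * Ideal.inertiaDeg' π P :=
      Finset.single_le_sum (f := fun P => Ideal.ramificationIdx' π P * Ideal.inertiaDeg' π P) (fun P _ => Nat.zero_le _) hQerase
    have hbig : (p : ℕ) ≤ Ideal.ramificationIdx' π PS * Ideal.inertiaDeg' π PS := by
      rw [hramPS]
      calc (p : ℕ) ≤ e := hpe'
      _ ≤ e * Ideal.inertiaDeg' π PS := Nat.le_mul_of_pos_right _ hfPS
    have hQpos : 0 < Ideal.ramificationIdx' π Q * Ideal.inertiaDeg' π Q :=
      Nat.mul_pos (Nat.pos_of_ne_zero hram0) hfQ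
    omega
  have hsingleton : (factors (Ideal.map φ π)).toFinset = {PS} :=
    Finset.eq_singleton_iff_unique_mem.mpr ⟨hPS2mem, huniq⟩
  rw [hsingleton, Finset.sum_singleton, hramPS] at hsumEF
  have he_p : e = (p : ℕ) := by
    have h1 : e ≤ e * Ideal.inertiaDeg' π PS := Nat.le_mul_of_pos_right _ hfPS
    omega
  -- the factorization is PS^p
  have hnf : normalizedFactors (Ideal.map φ π) = Multiset.replicate e PS := by
    have hall : ∀ Q ∈ normalizedFactors (Ideal.map φ π), Q = PS := by
      intro Q hQ
      exact huniq Q (by rwa [Multiset.mem_toFinset, factors_eq_normalizedFactors])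
    have h1 : normalizedFactors (Ideal.map φ π) =
        Multiset.replicate (Multiset.card (normalizedFactors (Ideal.map φ π))) PS :=
      Multiset.eq_replicate_card.mpr hall
    have h2 : e = Multiset.card (normalizedFactors (Ideal.map φ π)) := by
      rw [he_def]
      conv_lhs => rw [h1]
      rw [Multiset.count_replicate_self]
    rw [h1, ← h2]
  have hmapeq : Ideal.map φ π = PS ^ (p : ℕ) := by
    conv_lhs => rw [← _root_.prod_normalizedFactors_eq_self hmapbot, hnf]
    rw [Multiset.prod_replicate, he_p]
  -- finally, ω - 1 ∈ PS
  have htm : pVal PS (ω - 1) = m := by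
    rw [he_p] at hpt
    exact (Nat.eq_of_mul_eq_mul_left hppos hpt.symm)
  have hmem : ω - 1 ∈ PS := by
    have h2 := (mem_pow_iff_le_pVal hPSPrime hω1 1).mpr (by omega)
    simpa using h2
  exact ⟨PS, hPSprime, hmapeq, hmem⟩
end

section
/- Let A be a singular primary integer of K with A ≡ 1 mod π^{p+1} and A^{σ}/A^{μ} ∈ K^{*p} for some μ ∈ {1,…,p−1}, where σ is the ℚ-automorphism of K with σ(ζ) = ζ^v for a primitive root v mod p. Let ω = A^{1/p}, S = K(ω), and let σ_μ be an automorphism of S extending σ and satisfying σ_μ(ω) ≡ ω^μ mod Π² for every prime ideal Π of Z_S above π. Let π₀ be the unique prime of Z_S above π with ω ≡ 1 mod π₀². Then σ_μ(π₀) = π₀. -/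
open NumberField Ideal

lemma aux_sub_one_dvd_p {R : Type*} [CommRing R] [IsDomain R] {p : ℕ} (hp : 1 < p)
    {ζ : R} (hζ : IsPrimitiveRoot ζ p) : (ζ - 1) ∣ (p : R) := by
  have hsum : (∑ i ∈ Finset.range p, ζ ^ i) * (ζ - 1) = 0 := by
    rw [geom_sum_mul, hζ.pow_eq_one, sub_self]
  have hne : ζ - 1 ≠ 0 := sub_ne_zero.mpr (hζ.ne_one hp)
  have hzero : (∑ i ∈ Finset.range p, ζ ^ i) = 0 :=
    (mul_eq_zero.mp hsum).resolve_right hne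
  have heq : (p : R) = ∑ i ∈ Finset.range p, (1 - ζ ^ i) := by
    rw [Finset.sum_sub_distrib, hzero, sub_zero, Finset.sum_const, Finset.card_range,
      nsmul_eq_mul, mul_one]
  rw [heq]
  refine Finset.dvd_sum fun i _ => ?_
  have h : (ζ - 1) ∣ (ζ ^ i - 1) := ⟨∑ j ∈ Finset.range i, ζ ^ j, by rw [mul_comm, geom_sum_mul]⟩
  simpa [neg_sub] using h.neg_right

set_option maxHeartbeats 1000000 in
set_option synthInstance.maxHeartbeats 400000 in
/-- Let `A` be a singular primary integer of `K` with `A ≡ 1 mod π^(p+1)`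
and `A^σ / A^μ ∈ K^{*p}`, where `σ(ζ) = ζ^v` for a primitive root `v mod p` and
`μ ∈ {1, …, p-1}`. Let `ω = A^{1/p}`, `S = K(ω)`, and `σ_μ` an automorphism of `S`
extending `σ` with `σ_μ(ω) ≡ ω^μ mod Π²` for every prime `Π` of `Z_S` above `π`. If `π₀`
is the unique prime of `Z_S` above `π` with `ω ≡ 1 mod π₀²`, then `σ_μ(π₀) = π₀`. -/
theorem sigma_mu_fixes_pi_zero
    (p : ℕ+) (hp : (p : ℕ).Prime) (hodd : Odd (p : ℕ))
    (K : Type*) [Field K] [NumberField K] [IsCyclotomicExtension {(p : ℕ)} ℚ K]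
    (hirr : (p : ℕ) ∣ classNumber K)
    (ζ : 𝓞 K) (hζ : IsPrimitiveRoot ζ p)
    (π : Ideal (𝓞 K)) (hπ : π = Ideal.span {ζ - 1})
    -- `v` is a primitive root modulo `p` and `σ(ζ) = ζ^v` generates `Gal(K/ℚ)`
    (v : ℕ) (hv : orderOf (v : ZMod p) = (p : ℕ) - 1)
    (σ : K ≃ₐ[ℚ] K) (hσ : σ (ζ : K) = ((ζ ^ v : 𝓞 K) : K))
    (A : 𝓞 K)
    (hval : A ∉ π)
    (hnotp : ¬ ∃ B : K, B ^ (p : ℕ) = (A : K))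
    (𝔞 : Ideal (𝓞 K)) (h𝔞 : ¬ 𝔞.IsPrincipal)
    (hsing : Ideal.span {A} = 𝔞 ^ (p : ℕ))
    -- `A` singular primary, normalized so that `A ≡ 1 mod π^(p+1)`
    (hnorm : A - 1 ∈ π ^ ((p : ℕ) + 1))
    -- `A^σ / A^μ ∈ K^{*p}` with `μ ∈ {1, …, p-1}`
    (μ : ℕ) (hμ1 : 1 ≤ μ) (hμ2 : μ ≤ (p : ℕ) - 1)
    (hAσμ : ∃ B : K, B ≠ 0 ∧ σ (A : K) / (A : K) ^ μ = B ^ (p : ℕ))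
    -- `S = K(ω)` where `ω = A^{1/p}` (so `ω ∈ 𝓞 S`)
    (S : Type*) [Field S] [NumberField S] [Algebra K S]
    (ω : 𝓞 S) (hω : ω ^ (p : ℕ) = algebraMap (𝓞 K) (𝓞 S) A)
    (hgen : Algebra.adjoin K {(ω : S)} = ⊤)
    -- `σ_μ` is an automorphism of `S` extending `σ`
    (σμ : S ≃ₐ[ℚ] S) (hext : ∀ x : K, σμ (algebraMap K S x) = algebraMap K S (σ x))
    -- `σ_μ(ω) ≡ ω^μ mod Π²` for every prime `Π` of `Z_S` above `π`
    (hσμω : ∀ 𝔓 : Ideal (𝓞 S), 𝔓.IsPrime →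
      𝔓.comap (algebraMap (𝓞 K) (𝓞 S)) = π →
      RingOfIntegers.mapRingHom σμ ω - ω ^ μ ∈ 𝔓 ^ 2)
    -- `π₀` is the unique prime of `Z_S` above `π` with `ω ≡ 1 mod π₀²`
    (π₀ : Ideal (𝓞 S)) (hπ₀ : π₀.IsPrime)
    (hπ₀π : π₀.comap (algebraMap (𝓞 K) (𝓞 S)) = π)
    (hπ₀ω : ω - 1 ∈ π₀ ^ 2)
    (hπ₀uniq : ∀ 𝔓 : Ideal (𝓞 S), 𝔓.IsPrime →
      𝔓.comap (algebraMap (𝓞 K) (𝓞 S)) = π → ω - 1 ∈ 𝔓 ^ 2 → 𝔓 = π₀) :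
    Ideal.map (RingOfIntegers.mapRingHom σμ) π₀ = π₀ := by
  classical
  have hp1 : 1 < (p : ℕ) := hp.one_lt
  set e : 𝓞 S ≃+* 𝓞 S := RingOfIntegers.mapRingEquiv σμ with he
  set eK : 𝓞 K ≃+* 𝓞 K := RingOfIntegers.mapRingEquiv σ with heK
  obtain ⟨Q, hQ⟩ : ∃ Q : Ideal (𝓞 S), Q = Ideal.map (RingOfIntegers.mapRingHom σμ) π₀ :=
    ⟨_, rfl⟩
  have hQe : Q = Ideal.map e π₀ := by
    rw [hQ, he]
    rfl
  have hQcomapE : Q = Ideal.comap e.symm π₀ := by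
    rw [hQe]
    ext y
    rw [Ideal.mem_comap]
    constructor
    · intro hy
      obtain ⟨x, hx, rfl⟩ := (Ideal.mem_map_of_equiv _ y).mp hy
      simpa using hx
    · intro hy
      exact (Ideal.mem_map_of_equiv _ y).mpr ⟨e.symm y, hy, e.apply_symm_apply y⟩
  have hQprime : Q.IsPrime := by
    rw [hQcomapE]
    exact Ideal.IsPrime.comap _
  haveI := hQprime
  -- commuting square for the ring-of-integers maps
  have hcomm : ∀ a : 𝓞 K,
      e (algebraMap (𝓞 K) (𝓞 S) a) = algebraMap (𝓞 K) (𝓞 S) (eK a) := by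
    intro a
    rw [he, heK]
    refine RingOfIntegers.ext ?_
    show σμ (algebraMap K S (a : K)) = algebraMap K S (σ (a : K))
    exact hext _
  have hesymm : ∀ a : 𝓞 K,
      e.symm (algebraMap (𝓞 K) (𝓞 S) a) = algebraMap (𝓞 K) (𝓞 S) (eK.symm a) := by
    intro a
    have h := hcomm (eK.symm a)
    rw [eK.apply_symm_apply] at h
    rw [← h, e.symm_apply_apply]
  -- action of σ on ζ at the integer level
  have heKζ : eK ζ = ζ ^ v := by
    rw [heK]
    refine RingOfIntegers.ext ?_
    show σ (ζ : K) = ((ζ ^ v : 𝓞 K) : K)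
    exact hσ
  -- a natural number w with (ζ^v)^w = ζ
  have hvu : (v : ZMod p) ^ ((p : ℕ) - 1) = 1 := by
    rw [← hv]; exact pow_orderOf_eq_one _
  have hp2 : (p : ℕ) - 1 = ((p : ℕ) - 2) + 1 := by omega
  obtain ⟨w, hwmod⟩ : ∃ w : ℕ, (v * w) % (p : ℕ) = 1 % (p : ℕ) := by
    refine ⟨(((v : ZMod p) ^ ((p : ℕ) - 2)).val : ℕ), ?_⟩
    have hcast : ((v * ((v : ZMod p) ^ ((p : ℕ) - 2)).val : ℕ) : ZMod p)
        = ((1 : ℕ) : ZMod p) := by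
      push_cast
      rw [ZMod.natCast_val, ZMod.cast_id, ← pow_succ', ← hp2, hvu]
    exact (ZMod.natCast_eq_natCast_iff _ _ _).mp hcast
  have hζpow : ∀ n : ℕ, ζ ^ n = ζ ^ (n % (p : ℕ)) := by
    intro n
    conv_lhs => rw [← Nat.div_add_mod n (p : ℕ)]
    rw [pow_add, pow_mul, hζ.pow_eq_one, one_pow, one_mul]
  have hζvw : (ζ ^ v) ^ w = ζ := by
    rw [← pow_mul, hζpow (v * w), hwmod, ← hζpow 1, pow_one]
  have hdvdpow : ∀ n : ℕ, (ζ - 1) ∣ (ζ ^ n - 1) := fun n =>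
    ⟨∑ j ∈ Finset.range n, ζ ^ j, by rw [mul_comm, geom_sum_mul]⟩
  have hsymmζ : eK.symm ζ = ζ ^ w := by
    have h : eK (ζ ^ w) = ζ := by rw [map_pow, heKζ, hζvw]
    exact eK.symm_apply_eq.mpr h.symm
  -- π is stable under σ⁻¹
  have hπstab : ∀ a : 𝓞 K, eK.symm a ∈ π ↔ a ∈ π := by
    intro a
    rw [hπ, Ideal.mem_span_singleton, Ideal.mem_span_singleton]
    constructor
    · rintro ⟨c, hc⟩
      have ha : a = eK (eK.symm a) := (eK.apply_symm_apply a).symm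
      rw [hc, _root_.map_mul, _root_.map_sub, _root_.map_one, heKζ] at ha
      exact (hdvdpow v).trans ⟨eK c, ha⟩
    · rintro ⟨c, hc⟩
      rw [hc, _root_.map_mul, _root_.map_sub, _root_.map_one, hsymmζ]
      exact Dvd.dvd.mul_right (hdvdpow w) _
  -- the contracted ideal of Q is π
  have hQcomap : Q.comap (algebraMap (𝓞 K) (𝓞 S)) = π := by
    ext a
    rw [Ideal.mem_comap, hQcomapE, Ideal.mem_comap, hesymm a]
    constructor
    · intro h
      exact (hπstab a).mp (by rwa [← hπ₀π, Ideal.mem_comap])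
    · intro h
      have h2 := (hπstab a).mpr h
      rw [← hπ₀π, Ideal.mem_comap] at h2
      exact h2
  -- p lies in Q
  have hpπ : ((p : ℕ) : 𝓞 K) ∈ π := by
    rw [hπ, Ideal.mem_span_singleton]
    exact aux_sub_one_dvd_p hp1 hζ
  have hpQ : ((p : ℕ) : 𝓞 S) ∈ Q := by
    rw [← hQcomap, Ideal.mem_comap] at hpπ
    rwa [map_natCast] at hpπ
  -- ω ^ p - 1 ∈ Q
  have hωp1 : ω ^ (p : ℕ) - 1 ∈ Q := by
    have hA1π : A - 1 ∈ π := (Ideal.pow_le_self (Nat.succ_ne_zero _)) hnorm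
    rw [← hQcomap, Ideal.mem_comap] at hA1π
    rw [hω]
    simpa [map_sub, map_one] using hA1π
  -- ω - 1 ∈ Q (residue characteristic p)
  have hω1Q : ω - 1 ∈ Q := by
    rw [← Ideal.Quotient.eq_zero_iff_mem, map_sub, map_one] at hωp1 ⊢
    rw [map_pow] at hωp1
    set x : 𝓞 S ⧸ Q := Ideal.Quotient.mk Q ω with hx
    obtain ⟨r, hr⟩ := exists_add_pow_prime_eq hp x (-1)
    have hp0 : ((p : ℕ) : 𝓞 S ⧸ Q) = 0 := by
      rw [← map_natCast (Ideal.Quotient.mk Q), Ideal.Quotient.eq_zero_iff_mem]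
      exact hpQ
    have hxp : (x + (-1)) ^ (p : ℕ) = 0 := by
      rw [hr, hp0, zero_mul, zero_mul, zero_mul, add_zero, hodd.neg_one_pow, ← sub_eq_add_neg, hωp1]
    have hx1 : x + (-1) = 0 := (pow_eq_zero_iff hp.ne_zero).mp hxp
    rw [← sub_eq_add_neg] at hx1
    exact hx1
  -- μ is not in Q
  have hμlt : μ < (p : ℕ) := lt_of_le_of_lt hμ2 (Nat.sub_lt hp.pos one_pos)
  have hμQ : ((μ : ℕ) : 𝓞 S) ∉ Q := by
    intro hmem
    have hndvd : ¬ (p : ℕ) ∣ μ := Nat.not_dvd_of_pos_of_lt hμ1 hμlt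
    have hcop : Nat.gcd μ (p : ℕ) = 1 :=
      Nat.coprime_comm.mp (hp.coprime_iff_not_dvd.mpr hndvd)
    have hb := Nat.gcd_eq_gcd_ab μ (p : ℕ)
    rw [hcop] at hb
    have hone : (1 : 𝓞 S) = (μ : 𝓞 S) * ((Nat.gcdA μ (p : ℕ) : ℤ) : 𝓞 S)
        + ((p : ℕ) : 𝓞 S) * ((Nat.gcdB μ (p : ℕ) : ℤ) : 𝓞 S) := by
      have h := congrArg (fun z : ℤ => ((z : ℤ) : 𝓞 S)) hb
      push_cast at h
      simpa using h
    have h1Q : (1 : 𝓞 S) ∈ Q := by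
      rw [hone]
      exact Ideal.add_mem _ (Ideal.mul_mem_right _ _ hmem) (Ideal.mul_mem_right _ _ hpQ)
    exact hQprime.ne_top ((Ideal.eq_top_iff_one Q).mpr h1Q)
  -- ω^μ - 1 ∈ Q²
  have h1 : RingOfIntegers.mapRingHom σμ ω - 1 ∈ Q ^ 2 := by
    have hmm : RingOfIntegers.mapRingHom (σμ : S →+* S) (ω - 1)
        ∈ Ideal.map (RingOfIntegers.mapRingHom (σμ : S →+* S)) (π₀ ^ 2) :=
      Ideal.mem_map_of_mem _ hπ₀ω
    rw [Ideal.map_pow, ← hQ] at hmm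
    simpa [map_sub, map_one] using hmm
  have h2 := hσμω Q hQprime hQcomap
  have hωμ1 : ω ^ μ - 1 ∈ Q ^ 2 := by
    have h3 := Ideal.sub_mem _ h1 h2
    rwa [sub_sub_sub_cancel_left] at h3
  -- conclude via the geometric sum
  have hgeo : (∑ j ∈ Finset.range μ, ω ^ j) * (ω - 1) ∈ Q ^ 2 := by
    rw [geom_sum_mul]
    exact hωμ1
  have hsnot : (∑ j ∈ Finset.range μ, ω ^ j) ∉ Q := by
    intro hs
    apply hμQ
    have hdiff : (∑ j ∈ Finset.range μ, ω ^ j) - ((μ : ℕ) : 𝓞 S) ∈ Q := by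
      have heq2 : (∑ j ∈ Finset.range μ, ω ^ j) - ((μ : ℕ) : 𝓞 S)
          = ∑ j ∈ Finset.range μ, (ω ^ j - 1) := by
        rw [Finset.sum_sub_distrib]
        simp
      rw [heq2]
      refine Ideal.sum_mem _ fun j _ => ?_
      rw [← geom_sum_mul]
      exact Ideal.mul_mem_left _ _ hω1Q
    have hfin := Ideal.sub_mem _ hs hdiff
    rwa [sub_sub_cancel] at hfin
  have hfinal : ω - 1 ∈ Q ^ 2 := (Ideal.IsPrime.mul_mem_pow Q hgeo).resolve_left hsnot
  have hresult := hπ₀uniq Q hQprime hQcomap hfinal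
  rwa [hQ] at hresult
end
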